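/- arXiv:2402.07870 — 8 statements merged into one kernel-verified Lean document; each statement's English description precedes it below -/
import Mathlib

section
/- Let E ⊆ X × Y be a binary relation between finite sets X and Y, and let d ≥ 1. If there exist a_0,...,a_{2^{d+1}-1} ∈ X and b_0,...,b_{2^{d+1}-1} ∈ Y forming a ladder of height 2^{d+1} for E (i.e., (a_i,b_j) ∈ E iff i ≤ j), then there exist elements (a_σ)_{σ ∈ 2^{d+1}} in X and (b_σ)_{σ ∈ 2^{<d+1}} in Y, all chosen among the given a_i and b_i respectively via injective index maps, forming a tree of height d+1 for E: for every σ ∈ 2^{d+1} and i < d+1, (a_σ, b_{σ|_i}) ∈ E iff σ(i) = 1. -/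
/-!
Order the leaves `σ : Fin (d + 1) → Bool` lexicographically and give them the ladder positions in
decreasing order. A node `τ` of length `i` gets the position of the leaf `τ ⌢ 1 ⌢ 0 ⋯ 0`, the
lexicographically least leaf through `τ ⌢ 1`. A leaf `σ` through `τ` is lexicographically at least
that leaf exactly when `σ i = 1`, which on the ladder reads `a_σ ≤ b_τ`.
-/

open Function

theorem Pi.toLex_le_toLex_iff_of_eq_bot {ι : Type*} {β : ι → Type*} [LinearOrder ι]
    [WellFoundedLT ι] [∀ i, LinearOrder (β i)] [∀ i, OrderBot (β i)] {x y : ∀ i, β i} {i : ι}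
    (hlt : ∀ j < i, x j = y j) (hgt : ∀ j, i < j → x j = ⊥) :
    toLex x ≤ toLex y ↔ x i ≤ y i := by
  refine ⟨fun h => apply_le_of_toLex h hlt, fun h => ?_⟩
  calc toLex x ≤ toLex (update y i (x i)) := toLex_monotone fun j => by
        rcases lt_trichotomy j i with hj | rfl | hj
        · rw [update_of_ne hj.ne, hlt j hj]
        · rw [update_self]
        · rw [hgt j hj]; exact bot_le
    _ ≤ toLex y := toLex_update_le_self_iff.2 h

def rightSubtreeMinLeaf {n : ℕ} (τ : (i : Fin n) × (Fin i → Bool)) : Fin n → Bool :=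
  fun k => if h : k < τ.1 then τ.2 ⟨k, h⟩ else decide (k = τ.1)

theorem rightSubtreeMinLeaf_apply_self {n : ℕ} (τ : (i : Fin n) × (Fin i → Bool)) :
    rightSubtreeMinLeaf τ τ.1 = true := by
  simp [rightSubtreeMinLeaf]

theorem rightSubtreeMinLeaf_apply_of_lt {n : ℕ} (τ : (i : Fin n) × (Fin i → Bool)) {k : Fin n}
    (hk : τ.1 < k) : rightSubtreeMinLeaf τ k = false := by
  simp [rightSubtreeMinLeaf, hk.not_gt, hk.ne']

theorem rightSubtreeMinLeaf_injective {n : ℕ} : Injective (@rightSubtreeMinLeaf n) := by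
  have hle : ∀ τ τ' : (i : Fin n) × (Fin i → Bool),
      rightSubtreeMinLeaf τ = rightSubtreeMinLeaf τ' → τ.1 ≤ τ'.1 := fun τ τ' h => by
    by_contra! hlt
    have := congrFun h τ.1
    rw [rightSubtreeMinLeaf_apply_self, rightSubtreeMinLeaf_apply_of_lt _ hlt] at this
    exact Bool.noConfusion this
  rintro ⟨i, τ⟩ ⟨i', τ'⟩ h
  obtain rfl : i = i' := (hle _ _ h).antisymm (hle _ _ h.symm)
  congr 1
  funext k
  have hk : Fin.castLT k (k.2.trans i.2) < i := k.2
  have := congrFun h (Fin.castLT k (k.2.trans i.2))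
  simp only [rightSubtreeMinLeaf, dif_pos hk] at this
  exact this

theorem toLex_rightSubtreeMinLeaf_le_iff {n : ℕ} (σ : Fin n → Bool) (i : Fin n) :
    toLex (rightSubtreeMinLeaf ⟨i, fun j => σ ⟨j.1, j.2.trans i.2⟩⟩) ≤ toLex σ ↔ σ i = true := by
  set τ : (i : Fin n) × (Fin i → Bool) := ⟨i, fun j => σ ⟨j.1, j.2.trans i.2⟩⟩
  have hlt : ∀ j < τ.1, rightSubtreeMinLeaf τ j = σ j := fun j hj => dif_pos hj
  rw [Pi.toLex_le_toLex_iff_of_eq_bot hlt (fun j => rightSubtreeMinLeaf_apply_of_lt τ),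
    rightSubtreeMinLeaf_apply_self]
  exact ⟨Bool.eq_true_of_true_le, fun h => h ▸ le_rfl⟩

theorem ladder_to_tree_general {X Y : Type*}
    (E : Set (X × Y)) (d : ℕ)
    (a : Fin (2 ^ (d + 1)) → X) (b : Fin (2 ^ (d + 1)) → Y)
    (hlad : ∀ i j, (a i, b j) ∈ E ↔ i ≤ j) :
    ∃ f : (Fin (d + 1) → Bool) → Fin (2 ^ (d + 1)),
      ∃ g : ((i : Fin (d + 1)) × (Fin i.val → Bool)) → Fin (2 ^ (d + 1)),
        Function.Injective f ∧ Function.Injective g ∧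
          ∀ (σ : Fin (d + 1) → Bool) (i : Fin (d + 1)),
            (a (f σ), b (g ⟨i, fun j => σ ⟨j.1, j.2.trans i.2⟩⟩)) ∈ E ↔ σ i = true := by
  let e := Fintype.orderIsoFinOfCardEq (Lex (Fin (d + 1) → Bool)) (k := 2 ^ (d + 1)) (by simp)
  let f : (Fin (d + 1) → Bool) → Fin (2 ^ (d + 1)) := fun σ => (e.symm (toLex σ)).rev
  have hf : ∀ σ ρ, f σ ≤ f ρ ↔ toLex ρ ≤ toLex σ := fun σ ρ => by
    simp only [f, Fin.rev_le_rev, e.symm.le_iff_le]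
  have hf_inj : Injective f := Fin.rev_injective.comp (e.symm.injective.comp toLex.injective)
  refine ⟨f, f ∘ rightSubtreeMinLeaf, hf_inj, hf_inj.comp rightSubtreeMinLeaf_injective,
    fun σ i => ?_⟩
  rw [hlad, comp_apply, hf, toLex_rightSubtreeMinLeaf_le_iff]

/-- If a finite bipartite relation contains a ladder of height `2^(d+1)`, then it contains
a tree of height `d+1`, with elements chosen among the ladder via injective index maps. -/
theorem ladder_to_tree {X Y : Type*} [Fintype X] [Fintype Y]
    (E : Set (X × Y)) (d : ℕ) (hd : 1 ≤ d)
    (a : Fin (2 ^ (d + 1)) → X) (b : Fin (2 ^ (d + 1)) → Y)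
    (hlad : ∀ i j, (a i, b j) ∈ E ↔ i ≤ j) :
    ∃ f : (Fin (d + 1) → Bool) → Fin (2 ^ (d + 1)),
      ∃ g : ((i : Fin (d + 1)) × (Fin i.val → Bool)) → Fin (2 ^ (d + 1)),
        Function.Injective f ∧ Function.Injective g ∧
          ∀ (σ : Fin (d + 1) → Bool) (i : Fin (d + 1)),
            (a (f σ), b (g ⟨i, fun j => σ ⟨j.1, j.2.trans i.2⟩⟩)) ∈ E ↔ σ i = true :=
  ladder_to_tree_general E d a b hlad
end

section
/- Let E ⊆ X × Y be a binary relation, let d ≥ 1, and set D := 2^{d+1} - 2. If there is a tree of height D for E (elements (a_σ)_{σ∈2^D} in X and (b_σ)_{σ∈2^{<D}} in Y with (a_σ,b_{σ|_i}) ∈ E iff σ(i)=1), then there exist injective functions f: [d] → 2^D and g: [d] → 2^{<D} such that (a_{f(i)})_{i<d}, (b_{g(i)})_{i<d} is a ladder of height d for E, i.e., (a_{f(i)}, b_{g(j)}) ∈ E iff i ≤ j. -/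
open Set

section TreeLadderAux

variable {A B : Type*}

/-- Points compatible with the filters: all rows in `R0` unrelated, all rows in `R1` related. -/
def ladPts (Rel : A → B → Prop) (R0 R1 : Set A) : Set B :=
  {y | (∀ r ∈ R0, ¬ Rel r y) ∧ (∀ r ∈ R1, Rel r y)}

/-- Filtered shattering: the class `C` of rows shatters a binary tree of height `n`
all of whose node points lie in `ladPts Rel R0 R1`. -/
def ladShat (Rel : A → B → Prop) : ℕ → Set A → Set A → Set A → Prop
  | 0, C, _, _ => C.Nonempty
  | n + 1, C, R0, R1 => ∃ y ∈ ladPts Rel R0 R1,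
      ladShat Rel n {x ∈ C | Rel x y} R0 R1 ∧ ladShat Rel n {x ∈ C | ¬ Rel x y} R0 R1

theorem ladShat_mono {Rel : A → B → Prop} :
    ∀ {n : ℕ} {C C' R0 R1 : Set A}, ladShat Rel n C R0 R1 → C ⊆ C' →
      ladShat Rel n C' R0 R1 := by
  intro n
  induction n with
  | zero => intro C C' R0 R1 h hsub; exact h.mono hsub
  | succ n ih =>
      intro C C' R0 R1 h hsub
      obtain ⟨y, hy, h1, h0⟩ := h
      exact ⟨y, hy, ih h1 (fun x hx => ⟨hsub hx.1, hx.2⟩),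
        ih h0 (fun x hx => ⟨hsub hx.1, hx.2⟩)⟩

theorem ladShat_nonempty {Rel : A → B → Prop} :
    ∀ {n : ℕ} {C R0 R1 : Set A}, ladShat Rel n C R0 R1 → C.Nonempty := by
  intro n
  induction n with
  | zero => intro C R0 R1 h; exact h
  | succ n ih =>
      intro C R0 R1 h
      obtain ⟨y, _, h1, _⟩ := h
      obtain ⟨x, hx⟩ := ih h1
      exact ⟨x, hx.1⟩

theorem ladPts_mono {Rel : A → B → Prop} {R0 R0' R1 R1' : Set A}
    (h0 : R0 ⊆ R0') (h1 : R1 ⊆ R1') :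
    ladPts Rel R0' R1' ⊆ ladPts Rel R0 R1 := by
  intro y hy
  exact ⟨fun r hr => hy.1 r (h0 hr), fun r hr => hy.2 r (h1 hr)⟩

/-- The key splitting lemma: from a filtered shattered tree of height `m₀ + m₁` we get either
a tree of height `m₀` avoiding `r` positively, or a tree of height `m₁` on `r`-positive points. -/
theorem ladShat_split {Rel : A → B → Prop} :
    ∀ (n m₀ m₁ : ℕ), n = m₀ + m₁ → ∀ {C R0 R1 : Set A} (r : A),
      ladShat Rel n C R0 R1 →
      ladShat Rel m₀ C (insert r R0) R1 ∨ ladShat Rel m₁ C R0 (insert r R1) := by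
  intro n
  induction n using Nat.strong_induction_on with
  | _ n IH =>
    intro m₀ m₁ hn C R0 R1 r h
    rcases Nat.eq_zero_or_pos m₀ with hm0 | hm0
    · subst hm0
      exact Or.inl (ladShat_nonempty h)
    rcases Nat.eq_zero_or_pos m₁ with hm1 | hm1
    · subst hm1
      exact Or.inr (ladShat_nonempty h)
    obtain ⟨n', rfl⟩ : ∃ k, n = k + 1 := ⟨n - 1, by omega⟩
    obtain ⟨y, hy, h1, h0⟩ := h
    by_cases hr : Rel r y
    · -- the point `y` is `r`-positive; try to build the `m₁` side
      rcases IH n' (by omega) m₀ (m₁ - 1) (by omega) r h1 with c1 | c1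
      · exact Or.inl (ladShat_mono c1 (fun x hx => hx.1))
      rcases IH n' (by omega) m₀ (m₁ - 1) (by omega) r h0 with c0 | c0
      · exact Or.inl (ladShat_mono c0 (fun x hx => hx.1))
      · refine Or.inr ?_
        obtain ⟨m₁', rfl⟩ : ∃ k, m₁ = k + 1 := ⟨m₁ - 1, by omega⟩
        refine ⟨y, ⟨hy.1, ?_⟩, ?_, ?_⟩
        · intro s hs
          rcases mem_insert_iff.1 hs with rfl | hs
          · exact hr
          · exact hy.2 s hs
        · simpa using c1
        · simpa using c0
    · -- the point `y` is `r`-negative; try to build the `m₀` side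
      rcases IH n' (by omega) (m₀ - 1) m₁ (by omega) r h1 with c1 | c1
      swap
      · exact Or.inr (ladShat_mono c1 (fun x hx => hx.1))
      rcases IH n' (by omega) (m₀ - 1) m₁ (by omega) r h0 with c0 | c0
      swap
      · exact Or.inr (ladShat_mono c0 (fun x hx => hx.1))
      · refine Or.inl ?_
        obtain ⟨m₀', rfl⟩ : ∃ k, m₀ = k + 1 := ⟨m₀ - 1, by omega⟩
        refine ⟨y, ⟨?_, hy.2⟩, ?_, ?_⟩
        · intro s hs
          rcases mem_insert_iff.1 hs with rfl | hs
          · exact hr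
          · exact hy.1 s hs
        · simpa using c1
        · simpa using c0

/-- The height budget of the main induction. -/
def ladBudget : ℕ → ℕ → ℕ
  | 0, _ => 0
  | a + 1, b => ladBudget a (b - 1) + ladBudget a b + 2

theorem ladBudget_eq : ∀ a b : ℕ, a ≤ b → ladBudget a b = 2 ^ (a + 1) - 2 := by
  intro a
  induction a with
  | zero => intro b _; simp [ladBudget]
  | succ a ih =>
      intro b hab
      have h1 : ladBudget a (b - 1) = 2 ^ (a + 1) - 2 := ih _ (by omega)
      have h2 : ladBudget a b = 2 ^ (a + 1) - 2 := ih _ (by omega)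
      have h3 : (2 : ℕ) ^ (a + 2) = 2 ^ (a + 1) + 2 ^ (a + 1) := by ring
      have h4 : (2 : ℕ) ≤ 2 ^ (a + 1) := by
        calc (2 : ℕ) = 2 ^ 1 := by norm_num
        _ ≤ 2 ^ (a + 1) := Nat.pow_le_pow_right (by norm_num) (by omega)
      show ladBudget a (b - 1) + ladBudget a b + 2 = 2 ^ (a + 1 + 1) - 2
      omega

/-- The main lemma: filtered shattering of height `ladBudget a b` yields a ladder of height `a`
or a co-ladder of height `b`, with rows in `C` and columns compatible with the filters. -/
theorem ladMain {Rel : A → B → Prop} :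
    ∀ (a b : ℕ) (C R0 R1 : Set A), ladShat Rel (ladBudget a b) C R0 R1 →
      (∃ (x : Fin a → A) (y : Fin a → B), (∀ i, x i ∈ C) ∧ (∀ j, y j ∈ ladPts Rel R0 R1) ∧
        (∀ i j, Rel (x i) (y j) ↔ i ≤ j)) ∨
      (∃ (x : Fin b → A) (y : Fin b → B), (∀ i, x i ∈ C) ∧ (∀ j, y j ∈ ladPts Rel R0 R1) ∧
        (∀ i j, Rel (x i) (y j) ↔ j ≤ i)) := by
  intro a
  induction a with
  | zero =>
      intro b C R0 R1 _
      exact Or.inl ⟨Fin.elim0, Fin.elim0, fun i => i.elim0, fun j => j.elim0, fun i => i.elim0⟩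
  | succ a ih =>
      intro b C R0 R1 hsh
      rcases b with _ | b
      · exact Or.inr ⟨Fin.elim0, Fin.elim0, fun i => i.elim0, fun j => j.elim0, fun i => i.elim0⟩
      have hkey : ladBudget (a + 1) (b + 1) = (ladBudget a b + (ladBudget a (b + 1) + 1)) + 1 := by
        show ladBudget a b + ladBudget a (b + 1) + 2 = _
        omega
      rw [hkey] at hsh
      obtain ⟨y₁, hy₁, hpos, _⟩ := hsh
      obtain ⟨r, hr⟩ := ladShat_nonempty hpos
      rcases ladShat_split _ (ladBudget a b) (ladBudget a (b + 1) + 1) rfl r hpos with hL | hR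
      · -- left branch: recurse with (a, b) and append `(r, y₁)` on top / in front
        rcases ih b _ _ _ hL with ⟨x, y, hxC, hyP, hpat⟩ | ⟨x, y, hxC, hyP, hpat⟩
        · -- got a ladder of height a inside C¹ with r-negative columns: extend to a+1
          refine Or.inl ⟨Fin.snoc x r, Fin.snoc y y₁, ?_, ?_, ?_⟩
          · intro i
            refine Fin.lastCases ?_ ?_ i
            · simpa using hr.1
            · intro i; simpa using (hxC i).1
          · intro j
            refine Fin.lastCases ?_ ?_ j
            · simpa using hy₁
            · intro j
              simpa using ladPts_mono (subset_insert r R0) subset_rfl (hyP j)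
          · intro i j
            refine Fin.lastCases ?_ ?_ i
            · refine Fin.lastCases ?_ ?_ j
              · simpa using hr.2
              · intro j
                simp only [Fin.snoc_last, Fin.snoc_castSucc]
                have hno : ¬ Rel r (y j) := (hyP j).1 r (mem_insert r R0)
                have : ¬ (Fin.last a ≤ (j : Fin a).castSucc) := not_le.2 (Fin.castSucc_lt_last j)
                simp [hno, this]
            · intro i
              refine Fin.lastCases ?_ ?_ j
              · simp only [Fin.snoc_last, Fin.snoc_castSucc]
                have : Rel (x i) y₁ := (hxC i).2
                simp [this, Fin.le_last]
              · intro j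
                simp only [Fin.snoc_castSucc]
                rw [hpat i j, Fin.castSucc_le_castSucc_iff]
        · -- got a co-ladder of height b inside C¹ with r-negative columns: extend to b+1
          refine Or.inr ⟨Fin.cons r x, Fin.cons y₁ y, ?_, ?_, ?_⟩
          · intro i
            refine Fin.cases ?_ ?_ i
            · simpa using hr.1
            · intro i; simpa using (hxC i).1
          · intro j
            refine Fin.cases ?_ ?_ j
            · simpa using hy₁
            · intro j
              simpa using ladPts_mono (subset_insert r R0) subset_rfl (hyP j)
          · intro i j
            refine Fin.cases ?_ ?_ i
            · refine Fin.cases ?_ ?_ j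
              · simpa using hr.2
              · intro j
                simp only [Fin.cons_zero, Fin.cons_succ]
                have hno : ¬ Rel r (y j) := (hyP j).1 r (mem_insert r R0)
                have : ¬ ((j : Fin b).succ ≤ 0) := by
                  rw [Fin.le_zero_iff]; exact Fin.succ_ne_zero j
                simp [hno, this]
            · intro i
              refine Fin.cases ?_ ?_ j
              · simp only [Fin.cons_zero, Fin.cons_succ]
                have : Rel (x i) y₁ := (hxC i).2
                simp [this, Fin.zero_le]
              · intro j
                simp only [Fin.cons_succ]
                rw [hpat i j, Fin.succ_le_succ_iff]
      · -- right branch: descend one more level and recurse with (a, b+1)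
        obtain ⟨z, hz, _, hzneg⟩ := hR
        rcases ih (b + 1) _ _ _ hzneg with ⟨x, y, hxC, hyP, hpat⟩ | ⟨x, y, hxC, hyP, hpat⟩
        · -- ladder of height a with rows `z`-negative and columns `r`-positive: prepend (r, z)
          refine Or.inl ⟨Fin.cons r x, Fin.cons z y, ?_, ?_, ?_⟩
          · intro i
            refine Fin.cases ?_ ?_ i
            · simpa using hr.1
            · intro i; simpa using (hxC i).1.1
          · intro j
            refine Fin.cases ?_ ?_ j
            · simpa using ladPts_mono subset_rfl (subset_insert r R1) hz
            · intro j
              simpa using ladPts_mono subset_rfl (subset_insert r R1) (hyP j)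
          · intro i j
            refine Fin.cases ?_ ?_ i
            · refine Fin.cases ?_ ?_ j
              · have : Rel r z := hz.2 r (mem_insert r R1)
                simpa using this
              · intro j
                simp only [Fin.cons_zero, Fin.cons_succ]
                have : Rel r (y j) := (hyP j).2 r (mem_insert r R1)
                simp [this, Fin.zero_le]
            · intro i
              refine Fin.cases ?_ ?_ j
              · simp only [Fin.cons_zero, Fin.cons_succ]
                have hno : ¬ Rel (x i) z := (hxC i).2
                have : ¬ ((i : Fin a).succ ≤ 0) := by
                  rw [Fin.le_zero_iff]; exact Fin.succ_ne_zero i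
                simp [hno, this]
              · intro j
                simp only [Fin.cons_succ]
                rw [hpat i j, Fin.succ_le_succ_iff]
        · -- co-ladder of height b+1: pass through
          refine Or.inr ⟨x, y, ?_, ?_, hpat⟩
          · intro i; exact (hxC i).1.1
          · intro j
            exact ladPts_mono subset_rfl (subset_insert r R1) (hyP j)

end TreeLadderAux

/-- The tree hypothesis yields filtered shattering of full height. -/
theorem tree_shat {X Y : Type*} (E : Set (X × Y)) (D : ℕ)
    (a : (Fin D → Bool) → X)
    (b : ((i : Fin D) × (Fin i.val → Bool)) → Y)
    (htree : ∀ (σ : Fin D → Bool) (i : Fin D),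
      (a σ, b ⟨i, fun j => σ ⟨j.1, j.2.trans i.2⟩⟩) ∈ E ↔ σ i = true) :
    ∀ (m : ℕ), m ≤ D → ∀ w : Fin (D - m) → Bool,
      ladShat (fun σ t => (a σ, b t) ∈ E) m
        {σ | ∀ j : Fin (D - m), σ ⟨j.1, lt_of_lt_of_le j.2 (Nat.sub_le D m)⟩ = w j} ∅ ∅ := by
  intro m
  induction m with
  | zero =>
      intro _ w
      refine ⟨fun i => w ⟨i.1, by omega⟩, ?_⟩
      intro j
      exact congrArg w (Fin.ext rfl)
  | succ m ih =>
      intro hm w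
      have hk : D - (m + 1) < D := by omega
      have hkm : D - (m + 1) < D - m := by omega
      set i₀ : Fin D := ⟨D - (m + 1), hk⟩ with hi₀
      refine ⟨⟨i₀, fun j => w ⟨j.1, j.2⟩⟩, ⟨fun r hr => absurd hr (notMem_empty r),
        fun r hr => absurd hr (notMem_empty r)⟩, ?_, ?_⟩
      · -- positive child: extend the prefix with `true`
        refine ladShat_mono (ih (by omega) (fun j => if h : j.1 < D - (m + 1)
          then w ⟨j.1, h⟩ else true)) ?_
        intro σ hσ
        have hw : ∀ j : Fin (D - (m + 1)),
            σ ⟨j.1, lt_of_lt_of_le j.2 (Nat.sub_le D (m + 1))⟩ = w j := by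
          intro j
          have h2 : j.1 < D - m := by omega
          have := hσ ⟨j.1, h2⟩
          simpa [dif_pos j.2] using this
        have hbit : σ i₀ = true := by
          have := hσ ⟨D - (m + 1), hkm⟩
          simpa [hi₀, dif_neg (lt_irrefl (D - (m + 1)))] using this
        refine ⟨hw, ?_⟩
        have hfun : (fun j : Fin i₀.val => σ ⟨j.1, j.2.trans i₀.2⟩) =
            (fun j : Fin i₀.val => w ⟨j.1, j.2⟩) := by
          funext j
          exact hw ⟨j.1, j.2⟩
        have h := htree σ i₀
        rw [hfun] at h
        exact h.mpr hbit
      · -- negative child: extend the prefix with `false`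
        refine ladShat_mono (ih (by omega) (fun j => if h : j.1 < D - (m + 1)
          then w ⟨j.1, h⟩ else false)) ?_
        intro σ hσ
        have hw : ∀ j : Fin (D - (m + 1)),
            σ ⟨j.1, lt_of_lt_of_le j.2 (Nat.sub_le D (m + 1))⟩ = w j := by
          intro j
          have h2 : j.1 < D - m := by omega
          have := hσ ⟨j.1, h2⟩
          simpa [dif_pos j.2] using this
        have hbit : σ i₀ = false := by
          have := hσ ⟨D - (m + 1), hkm⟩
          simpa [hi₀, dif_neg (lt_irrefl (D - (m + 1)))] using this
        refine ⟨hw, ?_⟩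
        have hfun : (fun j : Fin i₀.val => σ ⟨j.1, j.2.trans i₀.2⟩) =
            (fun j : Fin i₀.val => w ⟨j.1, j.2⟩) := by
          funext j
          exact hw ⟨j.1, j.2⟩
        have h := htree σ i₀
        rw [hfun] at h
        intro hrel
        rw [h.mp hrel] at hbit
        simp at hbit

/-- If a bipartite relation contains a tree of height `D = 2^(d+1) - 2`, then it contains
a ladder of height `d`, chosen among the tree elements via injective index maps. -/
theorem tree_to_ladder {X Y : Type*} (E : Set (X × Y)) (d : ℕ) (hd : 1 ≤ d)
    (a : (Fin (2 ^ (d + 1) - 2) → Bool) → X)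
    (b : ((i : Fin (2 ^ (d + 1) - 2)) × (Fin i.val → Bool)) → Y)
    (htree : ∀ (σ : Fin (2 ^ (d + 1) - 2) → Bool) (i : Fin (2 ^ (d + 1) - 2)),
      (a σ, b ⟨i, fun j => σ ⟨j.1, j.2.trans i.2⟩⟩) ∈ E ↔ σ i = true) :
    ∃ f : Fin d → (Fin (2 ^ (d + 1) - 2) → Bool),
      ∃ g : Fin d → ((i : Fin (2 ^ (d + 1) - 2)) × (Fin i.val → Bool)),
        Function.Injective f ∧ Function.Injective g ∧
          ∀ i j : Fin d, (a (f i), b (g j)) ∈ E ↔ i ≤ j := by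
  classical
  have hsh0 := tree_shat E (2 ^ (d + 1) - 2) a b htree (2 ^ (d + 1) - 2) le_rfl (fun _ => false)
  have hsh : ladShat (fun σ t => (a σ, b t) ∈ E) (ladBudget d d) univ ∅ ∅ := by
    rw [ladBudget_eq d d le_rfl]
    exact ladShat_mono hsh0 (subset_univ _)
  have inj_of_pat : ∀ {k : ℕ} (f : Fin k → (Fin (2 ^ (d + 1) - 2) → Bool))
      (g : Fin k → ((i : Fin (2 ^ (d + 1) - 2)) × (Fin i.val → Bool))),
      (∀ i j, (a (f i), b (g j)) ∈ E ↔ i ≤ j) →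
      Function.Injective f ∧ Function.Injective g := by
    intro k f g hpat
    constructor
    · intro i i' he
      refine le_antisymm ?_ ?_
      · exact (hpat i i').mp (by rw [he]; exact (hpat i' i').mpr le_rfl)
      · exact (hpat i' i).mp (by rw [← he]; exact (hpat i i).mpr le_rfl)
    · intro j j' he
      refine le_antisymm ?_ ?_
      · exact (hpat j j').mp (by rw [← he]; exact (hpat j j).mpr le_rfl)
      · exact (hpat j' j).mp (by rw [he]; exact (hpat j' j').mpr le_rfl)
  rcases ladMain d d univ ∅ ∅ hsh with ⟨x, y, _, _, hpat⟩ | ⟨x, y, _, _, hpat⟩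
  · obtain ⟨hf, hg⟩ := inj_of_pat x y hpat
    exact ⟨x, y, hf, hg, hpat⟩
  · have hpat' : ∀ i j : Fin d, (a (x i.rev), b (y j.rev)) ∈ E ↔ i ≤ j := by
      intro i j
      rw [hpat i.rev j.rev, Fin.rev_le_rev]
    obtain ⟨hf, hg⟩ := inj_of_pat (fun i => x i.rev) (fun j => y j.rev) hpat'
    exact ⟨fun i => x i.rev, fun j => y j.rev, hf, hg, hpat'⟩
end

section
/- Let (X, μ_X) and (Y, μ_Y) be probability spaces, with a probability measure μ on X × Y extending the product measure and satisfying Fubini for a measurable set E ⊆ X × Y. Suppose A ⊆ X and B ⊆ Y are measurable sets of positive measure that are both perfect for E, meaning: for μ_Y-almost every y, μ_X(A ∩ E_y) ∈ {0, μ_X(A)}, and for μ_X-almost every x, μ_Y(B ∩ E_x) ∈ {0, μ_Y(B)}. Then μ(E ∩ (A × B)) / (μ_X(A)·μ_Y(B)) ∈ {0, 1}. -/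
open Set MeasureTheory
open scoped ENNReal

/-!
Let `N ⊆ A` be the points whose `E`-fibre meets `B` in a null set and `T ⊆ B` the points whose
`E`-fibre has full measure in `A`. Computing `μ (E ∩ N ×ˢ T)` through the `x`-fibres gives `0`,
through the `y`-fibres gives `μX N * μY T`, so `N` or `T` is null. By perfectness, if `N` is null
then almost every `x ∈ A` has a full fibre in `B` and `μ (E ∩ A ×ˢ B) = μX A * μY B`; if `T` is
null then almost every `y ∈ B` has a null fibre in `A` and `μ (E ∩ A ×ˢ B) = 0`.
-/

theorem measure_inter_eq_self_of_subset_of_inter_eq_self {α : Type*} [MeasurableSpace α]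
    {ν : Measure α} [IsFiniteMeasure ν] {A N F : Set α} (hN : MeasurableSet N) (hNA : N ⊆ A)
    (hAF : ν (A ∩ F) = ν A) : ν (N ∩ F) = ν N := by
  calc ν (N ∩ F) = ν (A ∩ F ∩ N) := by rw [inter_right_comm, inter_eq_right.2 hNA]
    _ = ν (A ∩ N) := Measure.measure_inter_eq_of_measure_eq hN hAF inter_subset_left
        (measure_ne_top _ _)
    _ = ν N := by rw [inter_eq_right.2 hNA]

theorem ae_restrict_of_ae_or_of_measure_eq_zero {α : Type*} [MeasurableSpace α] {ν : Measure α}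
    {s : Set α} {p q : α → Prop} (hs : MeasurableSet s) (h : ∀ᵐ x ∂ν, p x ∨ q x)
    (hp : ν {x ∈ s | p x} = 0) : ∀ᵐ x ∂ν.restrict s, q x := by
  filter_upwards [ae_restrict_of_ae h, ae_restrict_mem hs,
    ae_restrict_of_ae (measure_eq_zero_iff_ae_notMem.1 hp)] with x hpq hxs hx
  exact hpq.resolve_left fun hpx => hx ⟨hxs, hpx⟩

section Fibers

variable {X Y : Type*} [MeasurableSpace X] [MeasurableSpace Y]
  {μX : Measure X} {μY : Measure Y} {μ : Measure (X × Y)} {E : Set (X × Y)}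

theorem measurable_measure_inter_prodMk_right [SFinite μX] (hE : MeasurableSet E) {A : Set X}
    (hA : MeasurableSet A) : Measurable fun y => μX (A ∩ {x | (x, y) ∈ E}) := by
  have h : ∀ y, A ∩ {x | (x, y) ∈ E} = (fun x => (x, y)) ⁻¹' (A ×ˢ univ ∩ E) := by
    intro y; ext x; simp
  simp_rw [h]
  exact measurable_measure_prodMk_right ((hA.prod .univ).inter hE)

theorem measurable_measure_inter_prodMk_left [SFinite μY] (hE : MeasurableSet E) {B : Set Y}
    (hB : MeasurableSet B) : Measurable fun x => μY (B ∩ {y | (x, y) ∈ E}) := by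
  have h : ∀ x, B ∩ {y | (x, y) ∈ E} = Prod.mk x ⁻¹' (univ ×ˢ B ∩ E) := by
    intro x; ext y; simp
  simp_rw [h]
  exact measurable_measure_prodMk_left ((MeasurableSet.univ.prod hB).inter hE)

theorem measure_inter_prod_eq_setLIntegral_right
    (hFub : ∀ S : Set (X × Y), MeasurableSet S → μ S = ∫⁻ y, μX {x | (x, y) ∈ S} ∂μY)
    (hE : MeasurableSet E) {A : Set X} {B : Set Y} (hA : MeasurableSet A) (hB : MeasurableSet B) :
    μ (E ∩ A ×ˢ B) = ∫⁻ y in B, μX (A ∩ {x | (x, y) ∈ E}) ∂μY := by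
  rw [hFub _ (hE.inter (hA.prod hB)), ← lintegral_indicator hB]
  congr 1 with y
  by_cases hy : y ∈ B
  · rw [indicator_of_mem hy]; congr 1 with x; simp [hy, and_comm]
  · simp [hy]

theorem measure_inter_prod_eq_setLIntegral_left
    (hFub : ∀ S : Set (X × Y), MeasurableSet S → μ S = ∫⁻ x, μY {y | (x, y) ∈ S} ∂μX)
    (hE : MeasurableSet E) {A : Set X} {B : Set Y} (hA : MeasurableSet A) (hB : MeasurableSet B) :
    μ (E ∩ A ×ˢ B) = ∫⁻ x in A, μY (B ∩ {y | (x, y) ∈ E}) ∂μX := by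
  rw [hFub _ (hE.inter (hA.prod hB)), ← lintegral_indicator hA]
  congr 1 with x
  by_cases hx : x ∈ A
  · rw [indicator_of_mem hx]; congr 1 with y; simp [hx, and_comm]
  · simp [hx]

theorem measure_nullFibers_mul_measure_fullFibers_eq_zero [IsFiniteMeasure μX] [SFinite μY]
    (hFubY : ∀ S : Set (X × Y), MeasurableSet S → μ S = ∫⁻ y, μX {x | (x, y) ∈ S} ∂μY)
    (hFubX : ∀ S : Set (X × Y), MeasurableSet S → μ S = ∫⁻ x, μY {y | (x, y) ∈ S} ∂μX)
    (hE : MeasurableSet E) {A : Set X} {B : Set Y}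
    (hA : MeasurableSet A) (hB : MeasurableSet B) :
    μX {x ∈ A | μY (B ∩ {y | (x, y) ∈ E}) = 0} *
      μY {y ∈ B | μX (A ∩ {x | (x, y) ∈ E}) = μX A} = 0 := by
  set N := {x ∈ A | μY (B ∩ {y | (x, y) ∈ E}) = 0}
  set T := {y ∈ B | μX (A ∩ {x | (x, y) ∈ E}) = μX A}
  have hN : MeasurableSet N :=
    hA.inter (measurable_measure_inter_prodMk_left hE hB (measurableSet_singleton 0))
  have hT : MeasurableSet T :=
    hB.inter (measurable_measure_inter_prodMk_right hE hA (measurableSet_singleton _))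
  have hx_fibers : ∫⁻ x in N, μY (T ∩ {y | (x, y) ∈ E}) ∂μX = 0 :=
    setLIntegral_eq_zero hN fun x hx =>
      measure_mono_null (inter_subset_inter_left _ inter_subset_left) hx.2
  have hy_fibers : ∫⁻ y in T, μX (N ∩ {x | (x, y) ∈ E}) ∂μY = μX N * μY T := by
    rw [← setLIntegral_const]
    exact setLIntegral_congr_fun hT fun y hy =>
      measure_inter_eq_self_of_subset_of_inter_eq_self hN inter_subset_left hy.2
  rw [← hy_fibers, ← measure_inter_prod_eq_setLIntegral_right hFubY hE hN hT,
    measure_inter_prod_eq_setLIntegral_left hFubX hE hN hT, hx_fibers]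

end Fibers

theorem density_zero_one_on_perfect_sets_general
    {X Y : Type*} [MeasurableSpace X] [MeasurableSpace Y]
    (μX : Measure X) (μY : Measure Y) (μ : Measure (X × Y))
    [IsProbabilityMeasure μX] [IsProbabilityMeasure μY]
    (hFubY : ∀ S : Set (X × Y), MeasurableSet S →
      μ S = ∫⁻ y, μX {x | (x, y) ∈ S} ∂μY)
    (hFubX : ∀ S : Set (X × Y), MeasurableSet S →
      μ S = ∫⁻ x, μY {y | (x, y) ∈ S} ∂μX)
    (E : Set (X × Y)) (hE : MeasurableSet E)
    (A : Set X) (B : Set Y) (hA : MeasurableSet A) (hB : MeasurableSet B)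
    (hA0 : 0 < μX A) (hB0 : 0 < μY B)
    (hAperf : ∀ᵐ y ∂μY,
      μX (A ∩ {x | (x, y) ∈ E}) = 0 ∨ μX (A ∩ {x | (x, y) ∈ E}) = μX A)
    (hBperf : ∀ᵐ x ∂μX,
      μY (B ∩ {y | (x, y) ∈ E}) = 0 ∨ μY (B ∩ {y | (x, y) ∈ E}) = μY B) :
    μ (E ∩ A ×ˢ B) / (μX A * μY B) ∈ ({0, 1} : Set ℝ≥0∞) := by
  rcases mul_eq_zero.1 (measure_nullFibers_mul_measure_fullFibers_eq_zero hFubY hFubX hE hA hB)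
    with hN | hT
  · have hfull : ∀ᵐ x ∂μX.restrict A, μY (B ∩ {y | (x, y) ∈ E}) = μY B :=
      ae_restrict_of_ae_or_of_measure_eq_zero hA hBperf hN
    right
    rw [measure_inter_prod_eq_setLIntegral_left hFubX hE hA hB, lintegral_congr_ae hfull,
      setLIntegral_const, mul_comm]
    exact ENNReal.div_self (mul_ne_zero hA0.ne' hB0.ne')
      (ENNReal.mul_ne_top (measure_ne_top _ _) (measure_ne_top _ _))
  · have hnull : ∀ᵐ y ∂μY.restrict B, μX (A ∩ {x | (x, y) ∈ E}) = 0 :=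
      ae_restrict_of_ae_or_of_measure_eq_zero hB (hAperf.mono fun _ => Or.symm) hT
    left
    rw [measure_inter_prod_eq_setLIntegral_right hFubY hE hA hB, lintegral_congr_ae hnull,
      lintegral_zero, ENNReal.zero_div]

/-- If `A ⊆ X` and `B ⊆ Y` are measurable sets of positive measure, both perfect for a
measurable relation `E ⊆ X × Y`, then the density of `E` on `A × B` is exactly `0` or `1`. -/
theorem density_zero_one_on_perfect_sets
    {X Y : Type*} [MeasurableSpace X] [MeasurableSpace Y]
    (μX : Measure X) (μY : Measure Y) (μ : Measure (X × Y))
    [IsProbabilityMeasure μX] [IsProbabilityMeasure μY] [IsProbabilityMeasure μ]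
    (hProd : ∀ (s : Set X) (t : Set Y), MeasurableSet s → MeasurableSet t →
      μ (s ×ˢ t) = μX s * μY t)
    (hFubY : ∀ S : Set (X × Y), MeasurableSet S →
      μ S = ∫⁻ y, μX {x | (x, y) ∈ S} ∂μY)
    (hFubX : ∀ S : Set (X × Y), MeasurableSet S →
      μ S = ∫⁻ x, μY {y | (x, y) ∈ S} ∂μX)
    (E : Set (X × Y)) (hE : MeasurableSet E)
    (A : Set X) (B : Set Y) (hA : MeasurableSet A) (hB : MeasurableSet B)
    (hA0 : 0 < μX A) (hB0 : 0 < μY B)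
    (hAperf : ∀ᵐ y ∂μY,
      μX (A ∩ {x | (x, y) ∈ E}) = 0 ∨ μX (A ∩ {x | (x, y) ∈ E}) = μX A)
    (hBperf : ∀ᵐ x ∂μX,
      μY (B ∩ {y | (x, y) ∈ E}) = 0 ∨ μY (B ∩ {y | (x, y) ∈ E}) = μY B) :
    μ (E ∩ A ×ˢ B) / (μX A * μY B) ∈ ({0, 1} : Set ℝ≥0∞) :=
  density_zero_one_on_perfect_sets_general μX μY μ hFubY hFubX E hE A B hA hB hA0 hB0 hAperf hBperf
end

section
/- Let E ⊆ X × Y be measurable with respect to a graded probability space structure (probability measures on X, Y, and all finite products, with product-measure compatibility, symmetry under coordinate permutations, and Fubini). Then for every d ≥ 1: the set Lad^{E,d} ⊆ X^d × Y^d of ladders of height d for E has measure zero if and only if the set Lad^{μ,E,d} ⊆ Y^d of μ-ladders of height d has measure zero, where a tuple (b_0,...,b_{d−1}) ∈ Y^d is a μ-ladder if for every i < d, μ_X( (⋂_{j ≥ i} E_{b_j}) \ (⋃_{j < i} E_{b_j}) ) > 0. -/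
open Set MeasureTheory
open scoped ENNReal

/-- The set of ladders of height `d` for `E`. -/
def LadSet {X Y : Type*} (E : Set (X × Y)) (d : ℕ) : Set ((Fin d → X) × (Fin d → Y)) :=
  {p | ∀ i j : Fin d, (p.1 i, p.2 j) ∈ E ↔ i ≤ j}

/-- The set of μ-ladders of height `d` for `E`: tuples `b` such that for every `i < d` the
set of `x` related to exactly the `b_j` with `i ≤ j` has positive measure. -/
def muLadSet {X Y : Type*} [MeasurableSpace X] (μX : Measure X)
    (E : Set (X × Y)) (d : ℕ) : Set (Fin d → Y) :=
  {b | ∀ i : Fin d, 0 < μX {x | ∀ j : Fin d, ((x, b j) ∈ E ↔ i ≤ j)}}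

/-- The set of ladders of height `d` for `E` has measure zero iff the set of μ-ladders of
height `d` has measure zero. -/
theorem ladSet_null_iff_muLadSet_null
    {X Y : Type*} [MeasurableSpace X] [MeasurableSpace Y]
    (μX : Measure X) (μY : Measure Y)
    [IsProbabilityMeasure μX] [IsProbabilityMeasure μY]
    (E : Set (X × Y)) (hE : MeasurableSet E) (d : ℕ) (hd : 1 ≤ d) :
    ((Measure.pi fun _ : Fin d => μX).prod (Measure.pi fun _ : Fin d => μY))
        (LadSet E d) = 0 ↔
      (Measure.pi fun _ : Fin d => μY) (muLadSet μX E d) = 0 := by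
  classical
  set κ := (Measure.pi fun _ : Fin d => μX) with hκ
  set ν := (Measure.pi fun _ : Fin d => μY) with hν
  -- sections
  set S : (Fin d → Y) → Fin d → Set X :=
    fun b i => {x | ∀ j : Fin d, ((x, b j) ∈ E ↔ i ≤ j)} with hS
  have hSmeas : ∀ b i, MeasurableSet (S b i) := by
    intro b i
    have : S b i = ⋂ j : Fin d, {x | (x, b j) ∈ E ↔ i ≤ j} := by
      ext x; simp [hS]
    rw [this]
    refine MeasurableSet.iInter fun j => ?_
    have hm : Measurable fun x : X => (x, b j) := measurable_id.prodMk measurable_const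
    by_cases h : i ≤ j
    · simp only [h, iff_true]
      exact hm hE
    · simp only [h, iff_false]
      exact (hm hE).compl
  have hLad : MeasurableSet (LadSet E d) := by
    have : LadSet E d = ⋂ i : Fin d, ⋂ j : Fin d,
        {p : (Fin d → X) × (Fin d → Y) | (p.1 i, p.2 j) ∈ E ↔ i ≤ j} := by
      ext p; simp [LadSet]
    rw [this]
    refine MeasurableSet.iInter fun i => MeasurableSet.iInter fun j => ?_
    have hm : Measurable fun p : (Fin d → X) × (Fin d → Y) => (p.1 i, p.2 j) :=
      ((measurable_pi_apply i).comp measurable_fst).prodMk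
        ((measurable_pi_apply j).comp measurable_snd)
    by_cases h : i ≤ j
    · simp only [h, iff_true]
      exact hm hE
    · simp only [h, iff_false]
      exact (hm hE).compl
  have hsect : ∀ b : Fin d → Y,
      (fun a => (a, b)) ⁻¹' LadSet E d = Set.pi Set.univ (S b) := by
    intro b
    ext a
    simp [LadSet, hS, Set.mem_pi]
  have hκsect : ∀ b, κ ((fun a => (a, b)) ⁻¹' LadSet E d) = ∏ i, μX (S b i) := by
    intro b
    rw [hsect b, hκ, Measure.pi_pi]
  have hprod : (κ.prod ν) (LadSet E d)
      = ∫⁻ b, κ ((fun a => (a, b)) ⁻¹' LadSet E d) ∂ν :=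
    Measure.prod_apply_symm hLad
  have hfmeas : Measurable fun b => κ ((fun a => (a, b)) ⁻¹' LadSet E d) :=
    measurable_measure_prodMk_right hLad
  have hmu : muLadSet μX E d = {b | κ ((fun a => (a, b)) ⁻¹' LadSet E d) ≠ 0} := by
    ext b
    simp only [muLadSet, Set.mem_setOf_eq, hκsect b, Finset.prod_ne_zero_iff]
    constructor
    · intro h i _
      exact (h i).ne'
    · intro h i
      exact pos_iff_ne_zero.mpr (h i (Finset.mem_univ i))
  rw [hprod, lintegral_eq_zero_iff hfmeas, Filter.EventuallyEq, ae_iff, hmu]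
  simp only [Pi.zero_apply]
end

section
/- Let E ⊆ X × Y be measurable in a graded probability space, and d ≥ 1. Then μ(Tree^{E,d}) > 0 if and only if μ(Tree^{μ,E,d}) > 0, where Tree^{E,d} ⊆ X^{2^d} × Y^{2^d−1} is the set of trees of height d for E, and Tree^{μ,E,d} ⊆ Y^{2^d−1} is the set of μ-trees of height d for E. -/
open Set MeasureTheory
open scoped ENNReal

/-- The index set `2^{<d}` of 0-1 sequences of length `< d`. -/
abbrev TreeIdx (d : ℕ) := (i : Fin d) × (Fin i.val → Bool)

/-- The set of trees of height `d` for `E ⊆ X × Y`: families `(a_σ)_{σ ∈ 2^d}`,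
`(b_σ)_{σ ∈ 2^{<d}}` such that `(a_σ, b_{σ|_i}) ∈ E ↔ σ i = 1`. -/
def TreeSet {X Y : Type*} (E : Set (X × Y)) (d : ℕ) :
    Set (((Fin d → Bool) → X) × (TreeIdx d → Y)) :=
  {p | ∀ (σ : Fin d → Bool) (i : Fin d),
    (p.1 σ, p.2 ⟨i, fun j => σ ⟨j.1, j.2.trans i.2⟩⟩) ∈ E ↔ σ i = true}

/-- The set `X ∩ E^σ_{(b_{σ|_0}, …, b_{σ|_{i-1}})}` along the branch `σ ∈ 2^i`. -/
def branchSet {X Y : Type*} (E : Set (X × Y)) {d : ℕ} (b : TreeIdx d → Y)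
    (i : Fin d) (σ : Fin i.val → Bool) : Set X :=
  {x | ∀ j : Fin i.val,
    ((x, b ⟨⟨j.1, j.2.trans i.2⟩, fun k => σ ⟨k.1, k.2.trans j.2⟩⟩) ∈ E ↔ σ j = true)}

/-- The set of μ-trees of height `d` for `E`: families `(b_σ)_{σ ∈ 2^{<d}}` such that each
fiber `E_{b_σ}` μ-splits the branch set at `σ`. -/
def muTreeSet {X Y : Type*} [MeasurableSpace X] (μX : Measure X)
    (E : Set (X × Y)) (d : ℕ) : Set (TreeIdx d → Y) :=
  {b | ∀ (i : Fin d) (σ : Fin i.val → Bool),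
    0 < μX (branchSet E b i σ ∩ {x | (x, b ⟨i, σ⟩) ∈ E}) ∧
    0 < μX (branchSet E b i σ \ {x | (x, b ⟨i, σ⟩) ∈ E})}

/-- leaf sets -/
def leafSet {X Y : Type*} (E : Set (X × Y)) {d : ℕ} (b : TreeIdx d → Y)
    (σ : Fin d → Bool) : Set X :=
  {x | ∀ i : Fin d, ((x, b ⟨i, fun j => σ ⟨j.1, j.2.trans i.2⟩⟩) ∈ E ↔ σ i = true)}

example {X Y : Type*} (E : Set (X × Y)) (d : ℕ) :
    TreeSet E d = {p | ∀ σ, p.1 σ ∈ leafSet E p.2 σ} := rfl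

lemma leaf_subset_branch {X Y : Type*} (E : Set (X × Y)) {d : ℕ} (b : TreeIdx d → Y)
    (τ : Fin d → Bool) (i : Fin d) :
    leafSet E b τ ⊆ branchSet E b i (fun j => τ ⟨j.1, j.2.trans i.2⟩) := by
  intro x hx j
  exact hx ⟨j.1, j.2.trans i.2⟩

lemma muTree_eq {X Y : Type*} [MeasurableSpace X] (μX : Measure X) (E : Set (X × Y))
    {d : ℕ} (hd : 1 ≤ d) :
    muTreeSet μX E d = {b | ∀ σ : Fin d → Bool, 0 < μX (leafSet E b σ)} := by
  ext b
  constructor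
  · intro hb σ
    set i : Fin d := ⟨d - 1, by omega⟩ with hi
    have hsplit := hb i (fun j => σ ⟨j.1, j.2.trans i.2⟩)
    -- leafSet contains branchSet ∩ fiber (or \ fiber) at the last level
    have hsub : ∀ x, x ∈ branchSet E b i (fun j => σ ⟨j.1, j.2.trans i.2⟩) →
        ((x, b ⟨i, fun j => σ ⟨j.1, j.2.trans i.2⟩⟩) ∈ E ↔ σ i = true) →
        x ∈ leafSet E b σ := by
      intro x hbr hfib j
      rcases Nat.lt_or_ge j.1 (d - 1) with hj | hj
      · exact hbr ⟨j.1, hj⟩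
      · have hv : j.1 = d - 1 := le_antisymm (by omega) hj
        have hji : j = i := Fin.ext (by rw [hi]; exact hv)
        subst hji
        exact hfib
    cases hσi : σ i with
    | true =>
      refine lt_of_lt_of_le hsplit.1 (measure_mono ?_)
      rintro x ⟨hbr, hfib⟩
      exact hsub x hbr ⟨fun _ => hσi, fun _ => hfib⟩
    | false =>
      refine lt_of_lt_of_le hsplit.2 (measure_mono ?_)
      rintro x ⟨hbr, hfib⟩
      exact hsub x hbr ⟨fun h => absurd h hfib, fun h => by simp [hσi] at h⟩
  · intro hb i σ
    constructor
    · set τ : Fin d → Bool := fun j => if h : j.1 < i.1 then σ ⟨j.1, h⟩ else true with hτ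
      have hres : (fun j : Fin i.1 => τ ⟨j.1, j.2.trans i.2⟩) = σ := by
        funext j; exact dif_pos j.2
      have hτi : τ i = true := dif_neg (lt_irrefl _)
      refine lt_of_lt_of_le (hb τ) (measure_mono ?_)
      intro x hx
      constructor
      · have := leaf_subset_branch E b τ i hx
        rwa [hres] at this
      · have := hx i
        rw [hres, hτi] at this
        exact this.mpr rfl
    · set τ : Fin d → Bool := fun j => if h : j.1 < i.1 then σ ⟨j.1, h⟩ else false with hτ
      have hres : (fun j : Fin i.1 => τ ⟨j.1, j.2.trans i.2⟩) = σ := by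
        funext j; exact dif_pos j.2
      have hτi : τ i = false := dif_neg (lt_irrefl _)
      refine lt_of_lt_of_le (hb τ) (measure_mono ?_)
      intro x hx
      constructor
      · have := leaf_subset_branch E b τ i hx
        rwa [hres] at this
      · have := hx i
        rw [hres, hτi] at this
        simp only [mem_setOf_eq]
        intro h
        exact absurd (this.mp h) (by simp)

lemma leafSet_prod_measurable {X Y : Type*} [MeasurableSpace X] [MeasurableSpace Y]
    {E : Set (X × Y)} (hE : MeasurableSet E) {d : ℕ} (σ : Fin d → Bool) :
    MeasurableSet {p : X × (TreeIdx d → Y) | p.1 ∈ leafSet E p.2 σ} := by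
  have heq : {p : X × (TreeIdx d → Y) | p.1 ∈ leafSet E p.2 σ} =
      ⋂ i : Fin d, {p : X × (TreeIdx d → Y) |
        (p.1, p.2 ⟨i, fun j => σ ⟨j.1, j.2.trans i.2⟩⟩) ∈ E ↔ σ i = true} := by
    ext p; simp [leafSet]
  rw [heq]
  refine MeasurableSet.iInter fun i => ?_
  have hm : Measurable (fun p : X × (TreeIdx d → Y) =>
      (p.1, p.2 ⟨i, fun j => σ ⟨j.1, j.2.trans i.2⟩⟩)) :=
    measurable_fst.prodMk ((measurable_pi_apply _).comp measurable_snd)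
  cases hσi : σ i with
  | true =>
    convert hm hE using 1
    ext p; simp
  | false =>
    convert (hm hE).compl using 1
    ext p; simp

lemma treeSet_measurable {X Y : Type*} [MeasurableSpace X] [MeasurableSpace Y]
    {E : Set (X × Y)} (hE : MeasurableSet E) (d : ℕ) :
    MeasurableSet (TreeSet E d) := by
  have heq : TreeSet E d = ⋂ σ : Fin d → Bool,
      (fun p : ((Fin d → Bool) → X) × (TreeIdx d → Y) => (p.1 σ, p.2)) ⁻¹'
        {q : X × (TreeIdx d → Y) | q.1 ∈ leafSet E q.2 σ} := by
    ext p; simp [TreeSet, leafSet, mem_iInter]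
  rw [heq]
  exact MeasurableSet.iInter fun σ =>
    (((measurable_pi_apply σ).comp measurable_fst).prodMk measurable_snd)
      (leafSet_prod_measurable hE σ)


/-- The set of trees of height `d` for `E` has positive measure iff the set of μ-trees of
height `d` has positive measure. -/
theorem treeSet_pos_iff_muTreeSet_pos
    {X Y : Type*} [MeasurableSpace X] [MeasurableSpace Y]
    (μX : Measure X) (μY : Measure Y)
    [IsProbabilityMeasure μX] [IsProbabilityMeasure μY]
    (E : Set (X × Y)) (hE : MeasurableSet E) (d : ℕ) (hd : 1 ≤ d) :
    0 < ((Measure.pi fun _ : Fin d → Bool => μX).prod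
          (Measure.pi fun _ : TreeIdx d => μY)) (TreeSet E d) ↔
      0 < (Measure.pi fun _ : TreeIdx d => μY) (muTreeSet μX E d) := by
  have hmf : ∀ σ : Fin d → Bool, Measurable (fun b : TreeIdx d → Y => μX (leafSet E b σ)) := by
    intro σ
    exact measurable_measure_prodMk_right (leafSet_prod_measurable hE σ)
  have hmeas : Measurable (fun b : TreeIdx d → Y => ∏ σ : Fin d → Bool, μX (leafSet E b σ)) :=
    Finset.measurable_prod _ fun σ _ => hmf σ
  rw [Measure.prod_apply_symm (treeSet_measurable hE d)]
  have hfib : ∀ b : TreeIdx d → Y,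
      (fun a => (a, b)) ⁻¹' TreeSet E d = Set.pi univ (fun σ => leafSet E b σ) := by
    intro b; ext a; simp [TreeSet, leafSet, Set.mem_univ_pi]
  simp_rw [hfib, Measure.pi_pi]
  rw [lintegral_pos_iff_support hmeas]
  have hsupp : Function.support (fun b : TreeIdx d → Y => ∏ σ : Fin d → Bool, μX (leafSet E b σ))
      = muTreeSet μX E d := by
    rw [muTree_eq μX E hd]
    ext b
    simp only [Function.mem_support, mem_setOf_eq, Finset.prod_ne_zero_iff, pos_iff_ne_zero]
    constructor
    · intro h σ; exact h σ (Finset.mem_univ σ)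
    · intro h σ _; exact h σ
  rw [hsupp]
end

section
/- Let E ⊆ X₁ × ... × X_k be measurable in a graded probability space and suppose each X_t is partitioned into countably many measurable sets (A_{t,i})_{i∈ℕ}. Then the following are equivalent: (1) for every t and i, A_{t,i} is perfect for E viewed as a binary relation between X_t and the product of the remaining coordinates; (2) for every (i₁,...,i_k) ∈ ℕ^k with μ(A_{1,i₁} × ... × A_{k,i_k}) > 0, the density μ(E ∩ (A_{1,i₁} × ... × A_{k,i_k})) / μ(A_{1,i₁} × ... × A_{k,i_k}) is 0 or 1. -/
/-!
Both directions rest on Fubini along a single coordinate: for the product measure `P`,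
`P S = ∫ μᵢ(Sᵇ) dP(b)` where `Sᵇ` is the slice of `S` through `b` in direction `i`.

(2) ⇒ (1): if a box has density `0` (resp. `1`), Fubini shows that almost every slice of `E`
meets (resp. contains almost all of) the `i`-th side of the box, so the set of `b` whose slice
splits that side is null; the boxes are countably many and cover the space.

(1) ⇒ (2): conditioning on a box of positive measure gives again a product of probability
measures, under which almost every slice of `E` is null or conull in every direction. Replacing a
set `D ≈ E` by `{b | μᵢ(Dᵇ) ≠ 0}` makes it independent of the `i`-th coordinate without leaving
the a.e. class of `E`; doing this for each coordinate in turn yields a set that depends on no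
coordinate, i.e. `∅` or everything.
-/

open Set MeasureTheory Function ProbabilityTheory
open scoped ENNReal

section Coordinates

variable {ι : Type*} [DecidableEq ι] {X : ι → Type*}

def CoordInvariant (D : Set (∀ j, X j)) (i : ι) : Prop :=
  ∀ b x, update b i x ∈ D ↔ b ∈ D

theorem eq_empty_or_eq_univ_of_coordInvariant [Fintype ι] {D : Set (∀ j, X j)}
    (h : ∀ j, CoordInvariant D j) : D = ∅ ∨ D = univ := by
  refine or_iff_not_imp_left.2 fun hne => eq_univ_of_forall fun b' => ?_
  obtain ⟨b, hb⟩ := nonempty_iff_ne_empty.2 hne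
  suffices ∀ s : Finset ι, s.piecewise b' b ∈ D by simpa using this Finset.univ
  intro s
  induction s using Finset.induction_on with
  | empty => simpa using hb
  | insert i s _ ih => rwa [Finset.piecewise_insert, h]

theorem preimage_update_univ_pi_update {C : ∀ j, Set (X j)} {i : ι} {b : ∀ j, X j}
    (hb : b ∈ univ.pi (update C i univ)) (a : Set (X i)) :
    update b i ⁻¹' univ.pi (update C i a) = a := by
  ext x
  simp only [mem_preimage, mem_univ_pi] at hb ⊢
  refine ⟨fun h => by simpa using h i, fun hx j => ?_⟩
  by_cases hji : j = i
  · subst hji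
    simpa using hx
  · simpa [hji] using hb j

end Coordinates

section ProductMeasure

variable {ι : Type*} {X : ι → Type*} [∀ i, MeasurableSpace (X i)] {μ : ∀ i, Measure (X i)}

theorem pi_cond_eq_cond_pi [Fintype ι] [∀ i, IsFiniteMeasure (μ i)] {A : ∀ i, Set (X i)}
    (hA : ∀ i, MeasurableSet (A i)) :
    Measure.pi (fun i => (μ i)[|A i]) = (Measure.pi μ)[|univ.pi A] := by
  refine Measure.pi_eq fun C hC => ?_
  rw [cond_apply (MeasurableSet.univ_pi hA), ← pi_inter_distrib, Measure.pi_pi, Measure.pi_pi,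
    ENNReal.prod_inv_distrib (f := fun i => μ i (A i)) fun i _ j _ _ => .inr (measure_ne_top _ _),
    ← Finset.prod_mul_distrib]
  simp only [cond_apply (hA _)]

variable [DecidableEq ι]

/-- `a` is *perfect* for `E` in direction `i` when this set is null. -/
def fiberSplitSet (μ : ∀ i, Measure (X i)) (E : Set (∀ j, X j)) (i : ι) (a : Set (X i)) :
    Set (∀ j, X j) :=
  {b | 0 < μ i (a ∩ update b i ⁻¹' E) ∧ 0 < μ i (a \ update b i ⁻¹' E)}

theorem coordInvariant_setOf_measure_preimage_update_ne_zero {D : Set (∀ j, X j)} {i j : ι}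
    (hD : j ≠ i → CoordInvariant D j) :
    CoordInvariant {b | μ i (update b i ⁻¹' D) ≠ 0} j := by
  intro b x
  suffices update (update b j x) i ⁻¹' D = update b i ⁻¹' D by
    change _ ≠ 0 ↔ _ ≠ 0
    rw [this]
  ext y
  by_cases hji : j = i
  · subst hji
    simp
  · simp only [mem_preimage, update_comm hji]
    exact hD hji _ _

theorem measurable_measure_preimage_update [∀ i, SFinite (μ i)] (i : ι) {S : Set (∀ j, X j)}
    (hS : MeasurableSet S) : Measurable fun b => μ i (update b i ⁻¹' S) :=
  measurable_measure_prodMk_left (measurable_update' hS)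

variable [Fintype ι] [∀ i, IsProbabilityMeasure (μ i)]

theorem lintegral_pi_eq_lintegral_lintegral_update (i : ι) {f : (∀ j, X j) → ℝ≥0∞}
    (hf : Measurable f) :
    ∫⁻ b, f b ∂Measure.pi μ = ∫⁻ b, ∫⁻ x, f (update b i x) ∂μ i ∂Measure.pi μ := by
  have := fun j => nonempty_of_isProbabilityMeasure (μ j)
  have hg : Measurable fun b => ∫⁻ x, f (update b i x) ∂μ i :=
    lmarginal_singleton (μ := μ) f i ▸ hf.lmarginal μ
  rw [lintegral_eq_lmarginal_univ Classical.ofNonempty,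
    lintegral_eq_lmarginal_univ Classical.ofNonempty,
    lmarginal_erase' _ hf (Finset.mem_univ i), lmarginal_erase' _ hg (Finset.mem_univ i)]
  simp

theorem measure_pi_eq_lintegral_measure_preimage_update (i : ι) {S : Set (∀ j, X j)}
    (hS : MeasurableSet S) :
    Measure.pi μ S = ∫⁻ b, μ i (update b i ⁻¹' S) ∂Measure.pi μ := by
  rw [← lintegral_indicator_one hS,
    lintegral_pi_eq_lintegral_lintegral_update i (measurable_one.indicator hS)]
  congr 1 with b
  rw [← lintegral_indicator_one (measurable_update b hS)]
  rfl

theorem measure_pi_eq_zero_iff_ae_measure_preimage_update (i : ι) {S : Set (∀ j, X j)}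
    (hS : MeasurableSet S) :
    Measure.pi μ S = 0 ↔ ∀ᵐ b ∂Measure.pi μ, μ i (update b i ⁻¹' S) = 0 := by
  rw [measure_pi_eq_lintegral_measure_preimage_update i hS,
    lintegral_eq_zero_iff (measurable_measure_preimage_update i hS)]
  rfl

theorem ae_measure_preimage_update_eq (i : ι) {D E : Set (∀ j, X j)} (hD : MeasurableSet D)
    (hE : MeasurableSet E) (h : D =ᵐ[Measure.pi μ] E) :
    ∀ᵐ b ∂Measure.pi μ, μ i (update b i ⁻¹' D) = μ i (update b i ⁻¹' E) := by
  have := (measure_pi_eq_zero_iff_ae_measure_preimage_update i (hD.symmDiff hE)).1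
    (measure_symmDiff_eq_zero_iff.2 h)
  filter_upwards [this] with b hb
  exact measure_congr (measure_symmDiff_eq_zero_iff.1 hb)

theorem setOf_measure_preimage_update_ne_zero_ae_eq (i : ι) {E : Set (∀ j, X j)}
    (hE : MeasurableSet E)
    (h : ∀ᵐ b ∂Measure.pi μ, μ i (update b i ⁻¹' E) = 0 ∨ μ i (update b i ⁻¹' Eᶜ) = 0) :
    {b | μ i (update b i ⁻¹' E) ≠ 0} =ᵐ[Measure.pi μ] E := by
  set F := {b | μ i (update b i ⁻¹' E) ≠ 0}
  have hF : MeasurableSet F :=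
    measurable_measure_preimage_update i hE (measurableSet_singleton 0).compl
  have hFi : CoordInvariant F i :=
    coordInvariant_setOf_measure_preimage_update_ne_zero fun hii => absurd rfl hii
  refine ae_eq_set.2 ⟨?_, ?_⟩
  · refine (measure_pi_eq_zero_iff_ae_measure_preimage_update i (hF.diff hE)).2 ?_
    filter_upwards [h] with b hb
    by_cases hbF : b ∈ F
    · exact measure_mono_null (fun x hx => hx.2) (hb.resolve_left hbF)
    · exact measure_mono_null (fun x hx => hbF ((hFi b x).1 hx.1)) measure_empty
  · refine (measure_pi_eq_zero_iff_ae_measure_preimage_update i (hE.diff hF)).2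
      (Filter.Eventually.of_forall fun b => ?_)
    by_cases hbF : b ∈ F
    · exact measure_mono_null (fun x hx => hx.2 ((hFi b x).2 hbF)) measure_empty
    · exact measure_mono_null (fun x hx => hx.1) (not_not.1 hbF)

theorem exists_ae_eq_coordInvariant {E : Set (∀ j, X j)} (hE : MeasurableSet E)
    (h : ∀ i, ∀ᵐ b ∂Measure.pi μ, μ i (update b i ⁻¹' E) = 0 ∨ μ i (update b i ⁻¹' Eᶜ) = 0)
    (s : Finset ι) :
    ∃ D, MeasurableSet D ∧ D =ᵐ[Measure.pi μ] E ∧ ∀ j ∈ s, CoordInvariant D j := by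
  induction s using Finset.induction_on with
  | empty => exact ⟨E, hE, ae_eq_refl E, by simp⟩
  | insert i s _ ih =>
    obtain ⟨D, hD, hDE, hDs⟩ := ih
    have hD01 : ∀ᵐ b ∂Measure.pi μ,
        μ i (update b i ⁻¹' D) = 0 ∨ μ i (update b i ⁻¹' Dᶜ) = 0 := by
      filter_upwards [h i, ae_measure_preimage_update_eq i hD hE hDE,
        ae_measure_preimage_update_eq i hD.compl hE.compl hDE.compl] with b hb h₁ h₂
      rwa [h₁, h₂]
    refine ⟨_, measurable_measure_preimage_update i hD (measurableSet_singleton 0).compl,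
      (setOf_measure_preimage_update_ne_zero_ae_eq i hD hD01).trans hDE, fun j hj => ?_⟩
    refine coordInvariant_setOf_measure_preimage_update_ne_zero fun hji => hDs j ?_
    simpa [hji] using hj

theorem measure_pi_eq_zero_or_compl_eq_zero {E : Set (∀ j, X j)} (hE : MeasurableSet E)
    (h : ∀ i, ∀ᵐ b ∂Measure.pi μ, μ i (update b i ⁻¹' E) = 0 ∨ μ i (update b i ⁻¹' Eᶜ) = 0) :
    Measure.pi μ E = 0 ∨ Measure.pi μ Eᶜ = 0 := by
  obtain ⟨D, -, hDE, hD⟩ := exists_ae_eq_coordInvariant hE h Finset.univ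
  rcases eq_empty_or_eq_univ_of_coordInvariant fun j => hD j (Finset.mem_univ j) with rfl | rfl
  · left
    rw [← measure_congr hDE, measure_empty]
  · right
    rw [← measure_congr hDE.compl, compl_univ, measure_empty]

theorem measure_inter_eq_zero_or_diff_eq_zero_of_perfect {A : ∀ i, Set (X i)}
    (hA : ∀ i, MeasurableSet (A i)) (hA₀ : ∀ i, μ i (A i) ≠ 0) {E : Set (∀ j, X j)}
    (hE : MeasurableSet E) (h : ∀ i, Measure.pi μ (fiberSplitSet μ E i (A i)) = 0) :
    Measure.pi μ (E ∩ univ.pi A) = 0 ∨ Measure.pi μ (univ.pi A \ E) = 0 := by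
  have := fun i => cond_isProbabilityMeasure (μ := μ i) (hA₀ i)
  have hcond : ∀ i, ∀ᵐ b ∂Measure.pi (fun j => (μ j)[|A j]),
      (μ i)[|A i] (update b i ⁻¹' E) = 0 ∨ (μ i)[|A i] (update b i ⁻¹' Eᶜ) = 0 := by
    intro i
    rw [pi_cond_eq_cond_pi hA]
    filter_upwards [cond_absolutelyContinuous.ae_le (measure_eq_zero_iff_ae_notMem.1 (h i))]
      with b hb
    simp only [fiberSplitSet, mem_ofPred_eq, not_and_or, not_lt, nonpos_iff_eq_zero] at hb
    simp only [cond_apply (hA i), mul_eq_zero, ENNReal.inv_eq_zero, measure_ne_top, false_or]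
    exact hb
  have := measure_pi_eq_zero_or_compl_eq_zero hE hcond
  rw [pi_cond_eq_cond_pi hA, cond_apply (MeasurableSet.univ_pi hA),
    cond_apply (MeasurableSet.univ_pi hA)] at this
  simp only [mul_eq_zero, ENNReal.inv_eq_zero, measure_ne_top, false_or] at this
  rwa [inter_comm] at this

theorem measure_pi_univ_pi_update (C : ∀ i, Set (X i)) (i : ι) (a : Set (X i)) :
    Measure.pi μ (univ.pi (update C i a)) =
      μ i a * Measure.pi μ (univ.pi (update C i univ)) := by
  simp only [Measure.pi_pi, apply_update (fun j => μ j)]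
  rw [Finset.prod_update_of_mem (Finset.mem_univ i), Finset.prod_update_of_mem (Finset.mem_univ i),
    measure_univ, one_mul]

theorem measure_fiberSplitSet_inter_univ_pi_eq_zero {C : ∀ i, Set (X i)}
    (hC : ∀ i, MeasurableSet (C i)) {i : ι} {a : Set (X i)} (ha : MeasurableSet a)
    {E : Set (∀ j, X j)} (hE : MeasurableSet E)
    (h : Measure.pi μ (univ.pi (update C i a)) ≠ 0 →
      Measure.pi μ (E ∩ univ.pi (update C i a)) = 0 ∨
        Measure.pi μ (univ.pi (update C i a) \ E) = 0) :
    Measure.pi μ (fiberSplitSet μ E i a ∩ univ.pi C) = 0 := by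
  set W := univ.pi (update C i univ)
  have hCW : univ.pi C ⊆ W := pi_mono fun j _ => by
    by_cases hji : j = i
    · subst hji
      simp
    · simp [hji]
  refine measure_mono_null (inter_subset_inter_right _ hCW) ?_
  have hB : MeasurableSet (univ.pi (update C i a)) := MeasurableSet.univ_pi fun j => by
    by_cases hji : j = i
    · subst hji
      simpa using ha
    · simpa [hji] using hC j
  by_cases hB₀ : Measure.pi μ (univ.pi (update C i a)) = 0
  · rcases mul_eq_zero.1 ((measure_pi_univ_pi_update C i a).symm.trans hB₀) with ha₀ | hW₀
    · refine measure_mono_null (fun b hb => ?_) measure_empty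
      exact hb.1.1.ne' (measure_mono_null inter_subset_left ha₀)
    · exact measure_mono_null inter_subset_right hW₀
  rw [measure_eq_zero_iff_ae_notMem]
  rcases h hB₀ with h₀ | h₀
  · filter_upwards [(measure_pi_eq_zero_iff_ae_measure_preimage_update i (hE.inter hB)).1 h₀]
      with b hb ⟨hsplit, hbW⟩
    rw [preimage_inter, preimage_update_univ_pi_update hbW, inter_comm] at hb
    exact hsplit.1.ne' hb
  · filter_upwards [(measure_pi_eq_zero_iff_ae_measure_preimage_update i (hB.diff hE)).1 h₀]
      with b hb ⟨hsplit, hbW⟩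
    rw [preimage_sdiff, preimage_update_univ_pi_update hbW] at hb
    exact hsplit.2.ne' hb

end ProductMeasure

theorem div_mem_zero_one_iff {α : Type*} [MeasurableSpace α] {P : Measure α} [IsFiniteMeasure P]
    {B E : Set α} (hE : MeasurableSet E) (hB : P B ≠ 0) :
    P (E ∩ B) / P B ∈ ({0, 1} : Set ℝ≥0∞) ↔ P (E ∩ B) = 0 ∨ P (B \ E) = 0 := by
  have hsplit := measure_inter_add_sdiff B hE (μ := P)
  have hcancel := ENNReal.add_right_inj (measure_ne_top P (B ∩ E)) (b := P (B \ E)) (c := 0)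
  rw [add_zero] at hcancel
  rw [mem_insert_iff, mem_singleton_iff, ENNReal.div_eq_zero_iff,
    ENNReal.div_eq_one_iff hB (measure_ne_top _ _), inter_comm]
  simp only [measure_ne_top, or_false]
  rw [← hsplit, eq_comm (a := P (B ∩ E)) (b := _ + _), hcancel]

theorem perfect_partitions_iff_zero_one_densities_general
    {k : ℕ} {X : Fin k → Type*} [∀ t, MeasurableSpace (X t)]
    (μ : ∀ t, Measure (X t)) [∀ t, IsProbabilityMeasure (μ t)]
    (E : Set (∀ t, X t)) (hE : MeasurableSet E)
    (A : (t : Fin k) → ℕ → Set (X t))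
    (hmeas : ∀ t i, MeasurableSet (A t i))
    (hcover : ∀ t, (⋃ i, A t i) = univ) :
    ((∀ (t : Fin k) (i : ℕ),
        (Measure.pi μ) {b : ∀ s, X s |
          0 < μ t (A t i ∩ {x | Function.update b t x ∈ E}) ∧
          0 < μ t (A t i \ {x | Function.update b t x ∈ E})} = 0) ↔
      (∀ idx : Fin k → ℕ,
        0 < (Measure.pi μ) (univ.pi fun t => A t (idx t)) →
        (Measure.pi μ) (E ∩ univ.pi fun t => A t (idx t)) /
            (Measure.pi μ) (univ.pi fun t => A t (idx t)) ∈ ({0, 1} : Set ℝ≥0∞))) := by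
  constructor
  · intro hperfect idx hpos
    rw [div_mem_zero_one_iff hE hpos.ne']
    refine measure_inter_eq_zero_or_diff_eq_zero_of_perfect (fun t => hmeas t (idx t))
      (fun t => ?_) hE fun t => hperfect t (idx t)
    rw [Measure.pi_pi] at hpos
    exact Finset.prod_ne_zero_iff.1 hpos.ne' t (Finset.mem_univ t)
  · intro hdensity t i
    have hboxes : (⋃ idx : Fin k → ℕ, univ.pi fun s => A s (idx s)) = univ := by
      simp [iUnion_univ_pi A, hcover]
    change Measure.pi μ (fiberSplitSet μ E t (A t i)) = 0
    rw [← inter_univ (fiberSplitSet μ E t (A t i)), ← hboxes, inter_iUnion]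
    refine measure_iUnion_null fun idx => measure_fiberSplitSet_inter_univ_pi_eq_zero
      (fun s => hmeas s (idx s)) (hmeas t i) hE fun hB => ?_
    rw [← funext (apply_update A idx t i)] at hB ⊢
    exact (div_mem_zero_one_iff hE hB).1 (hdensity _ (pos_iff_ne_zero.2 hB))

/-- Perfection of each part of countable partitions of the coordinates is equivalent to
0-1 densities on all positive-measure boxes. -/
theorem perfect_partitions_iff_zero_one_densities
    {k : ℕ} (hk : 1 ≤ k) {X : Fin k → Type*} [∀ t, MeasurableSpace (X t)]
    (μ : ∀ t, Measure (X t)) [∀ t, IsProbabilityMeasure (μ t)]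
    (E : Set (∀ t, X t)) (hE : MeasurableSet E)
    (A : (t : Fin k) → ℕ → Set (X t))
    (hmeas : ∀ t i, MeasurableSet (A t i))
    (hdisj : ∀ t, Pairwise (Function.onFun Disjoint (A t)))
    (hcover : ∀ t, (⋃ i, A t i) = univ) :
    ((∀ (t : Fin k) (i : ℕ),
        (Measure.pi μ) {b : ∀ s, X s |
          0 < μ t (A t i ∩ {x | Function.update b t x ∈ E}) ∧
          0 < μ t (A t i \ {x | Function.update b t x ∈ E})} = 0) ↔
      (∀ idx : Fin k → ℕ,
        0 < (Measure.pi μ) (univ.pi fun t => A t (idx t)) →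
        (Measure.pi μ) (E ∩ univ.pi fun t => A t (idx t)) /
            (Measure.pi μ) (univ.pi fun t => A t (idx t)) ∈ ({0, 1} : Set ℝ≥0∞))) :=
  perfect_partitions_iff_zero_one_densities_general μ E hE A hmeas hcover
end

section
/- Let X and Y be sorts in a graded probability space and A ⊆ X × Y measurable with μ(A) > 0. Then there exist measurable sets U ⊆ X and V ⊆ Y such that: (1) μ(A ∩ (U × Y)) > 0; (2) μ((A ∩ (U × Y)) △ (A ∩ (X × V))) = 0; and (3) for any measurable U' ⊆ U with μ(A ∩ (U' × Y)) > 0 and μ(A ∩ ((U \ U') × Y)) > 0, and any measurable V' ⊆ Y, we have μ((A ∩ (U' × Y)) △ (A ∩ (U × V'))) > 0. In particular μ(A ∩ (U × V)) > 0, hence μ(U) > 0 and μ(V) > 0. -/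
/-!
Call `U ⊆ X` symmetric if `A ∩ (U × Y)` agrees a.e. with some `A ∩ (X × V)`; symmetric sets form
a σ-algebra, and the sought `U` is an atom, relative to it, of `ν U = μ (A ∩ (U × Y))`.

Fix `c > 0` such that `ρ`, the restriction of `μX` to `{x | μY A_x ≥ c}`, is nonzero. A witness
`V` of a symmetric `U` with `ρ U > 0` contains a.e. some slice `A_x` with `μY A_x ≥ c`, and
witnesses of disjoint symmetric sets can only overlap where the slice `A^y` is null. Hence `ρ`
admits no infinite disjoint family of symmetric sets of positive measure, so it has an atom `T`.
Since `ρ ≪ ν`, a symmetric `U ⊆ T` of least `ν`-measure with `ρ (T \ U) = 0` (a family closed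
under countable intersections) is an atom of `ν`.
-/

open Set MeasureTheory
open scoped ENNReal symmDiff
open Function

namespace MeasureTheory.Measure

variable {α : Type*} {m m0 : MeasurableSpace α}

def IsRelAtom (m : MeasurableSpace α) {m0 : MeasurableSpace α} (μ : Measure α) (T : Set α) :
    Prop :=
  0 < μ T ∧ ∀ S, MeasurableSet[m] S → S ⊆ T → μ S = 0 ∨ μ (T \ S) = 0

lemma exists_split_of_not_isRelAtom {μ : Measure α} {T : Set α} (hT : 0 < μ T)
    (hnot : ¬ IsRelAtom m μ T) :
    ∃ S, MeasurableSet[m] S ∧ S ⊆ T ∧ 0 < μ S ∧ 0 < μ (T \ S) := by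
  simp only [IsRelAtom, hT, true_and, not_forall, not_or, ← pos_iff_ne_zero] at hnot
  obtain ⟨S, hS, hST, h⟩ := hnot
  exact ⟨S, hS, hST, h⟩

theorem exists_isRelAtom_subset {μ : Measure α}
    (hfin : ∀ S : ℕ → Set α, Pairwise (Disjoint on S) → (∀ i, MeasurableSet[m] (S i)) →
      ∃ i, μ (S i) = 0)
    {U : Set α} (hU : MeasurableSet[m] U) (hμU : 0 < μ U) :
    ∃ T ⊆ U, MeasurableSet[m] T ∧ IsRelAtom m μ T := by
  by_contra! hno
  let Rest := {T : Set α // T ⊆ U ∧ MeasurableSet[m] T ∧ 0 < μ T}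
  have hsplit (T : Rest) :
      ∃ S, MeasurableSet[m] S ∧ S ⊆ T.1 ∧ 0 < μ S ∧ 0 < μ (T.1 \ S) :=
    exists_split_of_not_isRelAtom T.2.2.2 (hno T.1 T.2.1 T.2.2.1)
  choose piece hpiece_meas hpiece_sub hpiece_pos hrest_pos using hsplit
  let next (T : Rest) : Rest :=
    ⟨T.1 \ piece T, sdiff_subset.trans T.2.1, T.2.2.1.diff (hpiece_meas T), hrest_pos T⟩
  let R (k : ℕ) : Rest := next^[k] ⟨U, subset_rfl, hU, hμU⟩
  have hR_anti : Antitone fun k => (R k).1 := antitone_nat_of_succ_le fun k => by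
    simp only [R, iterate_succ_apply']
    exact sdiff_subset
  have hdisj : Pairwise (Disjoint on fun k => piece (R k)) := by
    refine (pairwise_disjoint_on _).2 fun i j hij => ?_
    have hj : piece (R j) ⊆ (R (i + 1)).1 := (hpiece_sub _).trans (hR_anti hij)
    simp only [R, iterate_succ_apply'] at hj
    exact disjoint_left.2 fun x hxi hxj => (hj hxj).2 hxi
  obtain ⟨i, hi⟩ := hfin _ hdisj fun k => hpiece_meas (R k)
  exact (hpiece_pos (R i)).ne' hi

theorem exists_isRelAtom_subset_of_absolutelyContinuous (hm : m ≤ m0) {ρ ν : Measure α}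
    [IsFiniteMeasure ν] (hρν : ρ ≪ ν) {T : Set α} (hT : MeasurableSet[m] T)
    (hTρ : IsRelAtom m ρ T) :
    ∃ U ⊆ T, MeasurableSet[m] U ∧ IsRelAtom m ν U := by
  set F := {S | MeasurableSet[m] S ∧ S ⊆ T ∧ ρ (T \ S) = 0}
  obtain ⟨u, -, hu_lim, hu_mem⟩ := exists_seq_tendsto_sInf (S := ν '' F)
    ⟨ν T, T, ⟨hT, subset_rfl, by simp⟩, rfl⟩ (OrderBot.bddBelow _)
  choose S hSF hSu using hu_mem
  set U := ⋂ k, S k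
  have hUF : U ∈ F := by
    refine ⟨.iInter fun k => (hSF k).1, iInter_subset_of_subset 0 (hSF 0).2.1, ?_⟩
    rw [sdiff_iInter]
    exact measure_iUnion_null fun k => (hSF k).2.2
  have hνU : ν U = sInf (ν '' F) :=
    le_antisymm (ge_of_tendsto' hu_lim fun k => (hSu k) ▸ measure_mono (iInter_subset S k))
      (sInf_le ⟨U, hUF, rfl⟩)
  have hρU : 0 < ρ U := hTρ.1.trans_le (measure_mono_ae (ae_le_set.2 hUF.2.2))
  have hnull_of_pos {P : Set α} (hP : MeasurableSet[m] P) (hPU : P ⊆ U) (hρP : ρ P ≠ 0) :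
      ν (U \ P) = 0 := by
    have hPF : P ∈ F :=
      ⟨hP, hPU.trans hUF.2.1, (hTρ.2 P hP (hPU.trans hUF.2.1)).resolve_left hρP⟩
    have : ν P + ν (U \ P) ≤ ν P + 0 := by
      rw [measure_add_sdiff (hm _ hP).nullMeasurableSet, union_eq_self_of_subset_left hPU,
        add_zero, hνU]
      exact sInf_le ⟨P, hPF, rfl⟩
    exact le_zero_iff.1 (ENNReal.le_of_add_le_add_left (measure_ne_top ν P) this)
  refine ⟨U, hUF.2.1, hUF.1, pos_iff_ne_zero.2 fun h => hρU.ne' (hρν h),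
    fun P hP hPU => ?_⟩
  by_cases hρP : ρ P = 0
  · have hρUP : ρ (U \ P) ≠ 0 := by rw [measure_sdiff_null hρP]; exact hρU.ne'
    left
    simpa [sdiff_sdiff_cancel_left hPU] using hnull_of_pos (hUF.1.diff hP) sdiff_subset hρUP
  · exact .inr (hnull_of_pos hP hPU hρP)

end MeasureTheory.Measure

section Symmetric

variable {X Y : Type*} [MeasurableSpace X] [MeasurableSpace Y]

abbrev symmetricSets (μ : Measure (X × Y)) (A : Set (X × Y)) : MeasurableSpace X where
  MeasurableSet' U := MeasurableSet U ∧
    ∃ V, MeasurableSet V ∧ μ ((A ∩ U ×ˢ univ) ∆ (A ∩ univ ×ˢ V)) = 0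
  measurableSet_empty := ⟨.empty, ∅, .empty, by simp⟩
  measurableSet_compl := by
    rintro U ⟨hU, V, hV, h⟩
    refine ⟨hU.compl, Vᶜ, hV.compl, ?_⟩
    simp only [measure_symmDiff_eq_zero_iff, prod_univ, univ_prod, preimage_compl] at h ⊢
    have h' := (Filter.EventuallyEq.refl _ A).diff h
    rwa [Set.sdiff_self_inter, Set.sdiff_self_inter, Set.sdiff_eq, Set.sdiff_eq] at h'
  measurableSet_iUnion := by
    intro U hU
    choose hU V hV h using hU
    refine ⟨.iUnion hU, ⋃ i, V i, .iUnion hV, ?_⟩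
    simp only [measure_symmDiff_eq_zero_iff, prod_univ, univ_prod, preimage_iUnion,
      inter_iUnion] at h ⊢
    exact Filter.EventuallyEq.countable_iUnion h

variable {μ : Measure (X × Y)} {A : Set (X × Y)} {U : Set X}

lemma symmetricSets_le : symmetricSets μ A ≤ ‹MeasurableSpace X› := fun _ hU => hU.1

lemma measurableSet_symmetricSets_of_symmDiff {U' : Set X} {V V' : Set Y}
    (hU' : MeasurableSet U') (hV : MeasurableSet V) (hV' : MeasurableSet V')
    (hUV : μ ((A ∩ U ×ˢ univ) ∆ (A ∩ univ ×ˢ V)) = 0)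
    (hU'V' : μ ((A ∩ U' ×ˢ univ) ∆ (A ∩ U ×ˢ V')) = 0) :
    MeasurableSet[symmetricSets μ A] U' := by
  refine ⟨hU', V ∩ V', hV.inter hV', ?_⟩
  rw [measure_symmDiff_eq_zero_iff] at *
  refine hU'V'.trans ?_
  have hsplit : A ∩ univ ×ˢ (V ∩ V') = (A ∩ univ ×ˢ V) ∩ (A ∩ univ ×ˢ V') := by
    ext; simp; tauto
  have : A ∩ U ×ˢ V' = (A ∩ U ×ˢ univ) ∩ (A ∩ univ ×ˢ V') := by ext; simp; tauto
  rw [this, hsplit]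
  exact hUV.inter .rfl

lemma measure_inter_prod_pos {V : Set Y} (hU : 0 < μ (A ∩ U ×ˢ univ))
    (hUV : μ ((A ∩ U ×ˢ univ) ∆ (A ∩ univ ×ˢ V)) = 0) : 0 < μ (A ∩ U ×ˢ V) := by
  have : A ∩ U ×ˢ V = (A ∩ U ×ˢ univ) ∩ (A ∩ univ ×ˢ V) := by ext; simp; tauto
  rw [this, ← measure_congr ((Filter.EventuallyEq.refl _ _).inter
    (measure_symmDiff_eq_zero_iff.1 hUV)), inter_self]
  exact hU

variable {μX : Measure X} {μY : Measure Y}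

lemma ae_measure_prodMk_left_sdiff_eq_zero [SFinite μY] {V : Set Y}
    (h : μX.prod μY ((A ∩ U ×ˢ univ) ∆ (A ∩ univ ×ˢ V)) = 0) :
    ∀ᵐ x ∂μX, x ∈ U → μY (Prod.mk x ⁻¹' A \ V) = 0 := by
  have hnull := (ae_eq_set.1 (measure_symmDiff_eq_zero_iff.1 h)).1
  filter_upwards [Measure.measure_ae_null_of_prod_null hnull] with x hx hxU
  refine Eq.trans ?_ hx
  congr 1
  ext y
  simp [hxU]

lemma ae_measure_prodMk_right_sdiff_eq_zero [SFinite μX] [SFinite μY] (hA : MeasurableSet A)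
    (hU : MeasurableSet U) {V : Set Y} (hV : MeasurableSet V)
    (h : μX.prod μY ((A ∩ U ×ˢ univ) ∆ (A ∩ univ ×ˢ V)) = 0) :
    ∀ᵐ y ∂μY, y ∈ V → μX ((·, y) ⁻¹' A \ U) = 0 := by
  have hmeas : MeasurableSet ((A ∩ univ ×ˢ V) \ (A ∩ U ×ˢ univ)) :=
    (hA.inter (MeasurableSet.univ.prod hV)).diff (hA.inter (hU.prod .univ))
  have hnull := (ae_eq_set.1 (measure_symmDiff_eq_zero_iff.1 h)).2
  rw [Measure.prod_apply_symm hmeas,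
    lintegral_eq_zero_iff (measurable_measure_prodMk_right hmeas)] at hnull
  filter_upwards [hnull] with y hy hyV
  refine Eq.trans ?_ hy
  congr 1
  ext x
  simp [hyV]

lemma map_fst_restrict_apply (μ : Measure (X × Y)) (A : Set (X × Y)) (hU : MeasurableSet U) :
    (μ.restrict A).map Prod.fst U = μ (A ∩ U ×ˢ univ) := by
  rw [Measure.map_apply measurable_fst hU, Measure.restrict_apply (measurable_fst hU),
    inter_comm, prod_univ]

lemma exists_pos_measure_slice_ge [SFinite μY] (hA : MeasurableSet A)
    (hA0 : 0 < μX.prod μY A) :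
    ∃ c, 0 < c ∧ 0 < μX {x | c ≤ μY (Prod.mk x ⁻¹' A)} := by
  by_contra! hnull
  have hsmall (n : ℕ) : ∀ᵐ x ∂μX, μY (Prod.mk x ⁻¹' A) < (n : ℝ≥0∞)⁻¹ := by
    have := nonpos_iff_eq_zero.1 (hnull _ (ENNReal.inv_pos.2 (ENNReal.natCast_ne_top n)))
    filter_upwards [measure_eq_zero_iff_ae_notMem.1 this] with x hx
    simpa using hx
  refine hA0.ne' ((Measure.measure_prod_null hA).2 ?_)
  filter_upwards [ae_all_iff.2 hsmall] with x hx
  by_contra hne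
  obtain ⟨n, hn⟩ := ENNReal.exists_inv_nat_lt hne
  exact (hx n).not_gt hn

lemma restrict_slice_ge_absolutelyContinuous [SFinite μY] {c : ℝ≥0∞} (hc : 0 < c) :
    μX.restrict {x | c ≤ μY (Prod.mk x ⁻¹' A)} ≪ ((μX.prod μY).restrict A).map Prod.fst := by
  refine Measure.AbsolutelyContinuous.mk fun S hS hνS => ?_
  rw [map_fst_restrict_apply _ _ hS] at hνS
  rw [Measure.restrict_apply hS, measure_eq_zero_iff_ae_notMem]
  filter_upwards [Measure.measure_ae_null_of_prod_null hνS] with x hx ⟨hxS, hxc⟩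
  have hslice : Prod.mk x ⁻¹' (A ∩ S ×ˢ univ) = Prod.mk x ⁻¹' A := by ext; simp [hxS]
  rw [Pi.zero_apply, hslice] at hx
  exact hc.ne' (nonpos_iff_eq_zero.1 (hxc.trans_eq hx))

lemma exists_measure_inter_slice_ge_eq_zero [SFinite μX] [IsFiniteMeasure μY]
    (hA : MeasurableSet A) {c : ℝ≥0∞} (hc : 0 < c) (S : ℕ → Set X)
    (hS : Pairwise (Disjoint on S))
    (hsym : ∀ i, MeasurableSet[symmetricSets (μX.prod μY) A] (S i)) :
    ∃ i, μX (S i ∩ {x | c ≤ μY (Prod.mk x ⁻¹' A)}) = 0 := by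
  by_contra! hpos
  choose hS_meas V hV hSV using hsym
  set N := {y | μX ((·, y) ⁻¹' A) = 0}
  have hN : MeasurableSet N := measurable_measure_prodMk_right hA (measurableSet_singleton 0)
  have hAN : ∀ᵐ x ∂μX, μY (Prod.mk x ⁻¹' A ∩ N) = 0 := by
    have hmeas : MeasurableSet (A ∩ univ ×ˢ N) := hA.inter (MeasurableSet.univ.prod hN)
    have : μX.prod μY (A ∩ univ ×ˢ N) = 0 := by
      rw [Measure.prod_apply_symm hmeas]
      refine (lintegral_congr fun y => ?_).trans lintegral_zero
      by_cases hy : y ∈ N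
      · exact measure_mono_null (fun x hx => hx.1) hy
      · simp [hy]
    filter_upwards [Measure.measure_ae_null_of_prod_null this] with x hx
    refine Eq.trans ?_ hx
    congr 1
    ext
    simp
  have hlarge (i : ℕ) : c ≤ μY (V i \ N) := by
    obtain ⟨x, ⟨hxS, hxc⟩, hx⟩ := Measure.exists_mem_of_measure_ne_zero_of_ae (hpos i)
      (ae_restrict_of_ae ((ae_measure_prodMk_left_sdiff_eq_zero (hSV i)).and hAN))
    refine hxc.trans (measure_mono_ae (ae_le_set.2 (measure_mono_null ?_
      (measure_union_null (hx.1 hxS) hx.2))))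
    intro y hy
    by_cases hyN : y ∈ N
    · exact .inr ⟨hy.1, hyN⟩
    · exact .inl ⟨hy.1, fun hyV => hy.2 ⟨hyV, hyN⟩⟩
  have hdisj : Pairwise (AEDisjoint μY on fun i => V i \ N) := by
    intro i j hij
    refine measure_eq_zero_iff_ae_notMem.2 ?_
    filter_upwards [ae_measure_prodMk_right_sdiff_eq_zero hA (hS_meas i) (hV i) (hSV i),
      ae_measure_prodMk_right_sdiff_eq_zero hA (hS_meas j) (hV j) (hSV j)]
      with y hi hj hy
    obtain ⟨⟨hyi, hyN⟩, hyj, -⟩ := hy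
    refine hyN (measure_mono_null (fun x hx => ?_) (measure_union_null (hi hyi) (hj hyj)))
    by_cases hxi : x ∈ S i
    · exact .inr ⟨hx, (hS hij).notMem_of_mem_left hxi⟩
    · exact .inl ⟨hx, hxi⟩
  exact infinite_univ (α := ℕ) ((Measure.finite_const_le_meas_of_disjoint_iUnion₀ μY hc
    (fun i => ((hV i).diff hN).nullMeasurableSet) hdisj (measure_ne_top _ _)).subset
    fun i _ => hlarge i)

end Symmetric

/-- Maximal local symmetrization: for a positive-measure `A ⊆ X × Y` there are measurable
`U ⊆ X`, `V ⊆ Y` with `A ∩ (U × Y)` of positive measure and equal (up to measure zero) to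
`A ∩ (X × V)`, such that no further subdivision of `U` keeps this symmetry. -/
theorem maximal_local_symmetrization
    {X Y : Type*} [MeasurableSpace X] [MeasurableSpace Y]
    (μX : Measure X) (μY : Measure Y)
    [IsProbabilityMeasure μX] [IsProbabilityMeasure μY]
    (A : Set (X × Y)) (hA : MeasurableSet A) (hA0 : 0 < (μX.prod μY) A) :
    ∃ U : Set X, ∃ V : Set Y, MeasurableSet U ∧ MeasurableSet V ∧
      0 < (μX.prod μY) (A ∩ (U ×ˢ (univ : Set Y))) ∧
      (μX.prod μY) ((A ∩ (U ×ˢ (univ : Set Y))) ∆ (A ∩ ((univ : Set X) ×ˢ V))) = 0 ∧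
      (∀ U' : Set X, MeasurableSet U' → U' ⊆ U →
        0 < (μX.prod μY) (A ∩ (U' ×ˢ (univ : Set Y))) →
        0 < (μX.prod μY) (A ∩ ((U \ U') ×ˢ (univ : Set Y))) →
        ∀ V' : Set Y, MeasurableSet V' →
          0 < (μX.prod μY) ((A ∩ (U' ×ˢ (univ : Set Y))) ∆ (A ∩ (U ×ˢ V')))) ∧
      0 < (μX.prod μY) (A ∩ (U ×ˢ V)) ∧ 0 < μX U ∧ 0 < μY V := by
  obtain ⟨c, hc, hDc⟩ := exists_pos_measure_slice_ge hA hA0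
  obtain ⟨T, -, hT, hTatom⟩ := Measure.exists_isRelAtom_subset
    (m := symmetricSets (μX.prod μY) A) (μ := μX.restrict {x | c ≤ μY (Prod.mk x ⁻¹' A)})
    (fun S hS hsym => (exists_measure_inter_slice_ge_eq_zero hA hc S hS hsym).imp
      fun i hi => by rwa [Measure.restrict_apply (hsym i).1])
    MeasurableSet.univ (by rwa [Measure.restrict_apply_univ])
  obtain ⟨U, -, ⟨hU, V, hV, hUV⟩, hνU, hatom⟩ :=
    Measure.exists_isRelAtom_subset_of_absolutelyContinuous symmetricSets_le
      (restrict_slice_ge_absolutelyContinuous hc) hT hTatom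
  rw [map_fst_restrict_apply _ _ hU] at hνU
  have hUVpos := measure_inter_prod_pos hνU hUV
  obtain ⟨hUpos, hVpos⟩ := CanonicallyOrderedAdd.mul_pos.1
    ((hUVpos.trans_le (measure_mono inter_subset_right)).trans_eq (Measure.prod_prod U V))
  refine ⟨U, V, hU, hV, hνU, hUV, fun U' hU' hU'U hpos hpos' V' hV' => ?_, hUVpos, hUpos, hVpos⟩
  refine pos_iff_ne_zero.2 fun h => ?_
  rcases hatom U' (measurableSet_symmetricSets_of_symmDiff hU' hV hV' hUV h) hU'U with h0 | h0
  · exact hpos.ne' (by rwa [map_fst_restrict_apply _ _ hU'] at h0)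
  · exact hpos'.ne' (by rwa [map_fst_restrict_apply _ _ (hU.diff hU')] at h0)
end

section
/- Let X := {0,1,2}^ℕ and define E ⊆ X³ by: (x,y,z) ∈ E if and only if there exists n such that |{x(m), y(m), z(m)}| = 1 for all m < n and |{x(n), y(n), z(n)}| = 3. Then E is slice-wise 7-stable: for every x ∈ X, the binary relation E_x = {(y,z) : (x,y,z) ∈ E} ⊆ X × X admits no ladder of height 7, i.e., there are no y_0,...,y_6, z_0,...,z_6 ∈ X with (x, y_i, z_j) ∈ E ⟺ i ≤ j; and by symmetry of E in its arguments the same holds for the slices E_y and E_z. -/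
open Finset

/-- The ternary relation on `{0,1,2}^ℕ`: `(x,y,z) ∈ E` iff at the first coordinate where
the three sequences do not all agree, all three values are pairwise distinct. -/
def ETern (x y z : ℕ → Fin 3) : Prop :=
  ∃ n : ℕ, (∀ m < n, ({x m, y m, z m} : Finset (Fin 3)).card = 1) ∧
    ({x n, y n, z n} : Finset (Fin 3)).card = 3

lemma card1_iff : ∀ a b c : Fin 3,
    ({a, b, c} : Finset (Fin 3)).card = 1 ↔ (a = b ∧ a = c) := by decide

lemma card3_iff : ∀ a b c : Fin 3,
    ({a, b, c} : Finset (Fin 3)).card = 3 ↔ (a ≠ b ∧ a ≠ c ∧ b ≠ c) := by decide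

lemma fin3_pigeon' : ∀ a b c d : Fin 3,
    (a ≠ b ∧ a ≠ c ∧ b ≠ c ∧ d ≠ a ∧ d ≠ b) → d = c := by decide

lemma fin3_pigeon (a b c d : Fin 3) (h1 : a ≠ b) (h2 : a ≠ c) (h3 : b ≠ c)
    (h4 : d ≠ a) (h5 : d ≠ b) : d = c := fin3_pigeon' a b c d ⟨h1, h2, h3, h4, h5⟩

lemma swap12 : ∀ a b c : Fin 3, ({a, b, c} : Finset (Fin 3)) = {b, a, c} := by decide

lemma rot : ∀ a b c : Fin 3, ({a, b, c} : Finset (Fin 3)) = {c, a, b} := by decide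

lemma ETern_swap12 (x y z : ℕ → Fin 3) : ETern x y z ↔ ETern y x z := by
  unfold ETern
  constructor <;> rintro ⟨n, h1, h2⟩ <;> refine ⟨n, fun m hm => ?_, ?_⟩
  · rw [← swap12]; exact h1 m hm
  · rw [← swap12]; exact h2
  · rw [swap12]; exact h1 m hm
  · rw [swap12]; exact h2

lemma ETern_rot (x y z : ℕ → Fin 3) : ETern x y z ↔ ETern z x y := by
  unfold ETern
  constructor <;> rintro ⟨n, h1, h2⟩ <;> refine ⟨n, fun m hm => ?_, ?_⟩
  · rw [← rot]; exact h1 m hm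
  · rw [← rot]; exact h2
  · rw [rot]; exact h1 m hm
  · rw [rot]; exact h2

lemma key (w : ℕ → Fin 3) (y z : Fin 7 → ℕ → Fin 3)
    (h : ∀ i j : Fin 7, ETern w (y i) (z j) ↔ i ≤ j) : False := by
  obtain ⟨n0, h0a, h0c⟩ := (h 0 0).mpr le_rfl
  obtain ⟨n01, h01a, h01c⟩ := (h 0 1).mpr (by decide)
  obtain ⟨n1, h1a, h1c⟩ := (h 1 1).mpr le_rfl
  -- all witnesses agree
  have e1 : n0 = n01 := by
    rcases lt_trichotomy n0 n01 with hlt | heq | hgt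
    · exact absurd ((card1_iff _ _ _).mp (h01a n0 hlt)).1
        ((card3_iff _ _ _).mp h0c).1
    · exact heq
    · exact absurd ((card1_iff _ _ _).mp (h0a n01 hgt)).1
        ((card3_iff _ _ _).mp h01c).1
  have e2 : n01 = n1 := by
    rcases lt_trichotomy n01 n1 with hlt | heq | hgt
    · exact absurd (((card1_iff _ _ _).mp (h1a n01 hlt)).2)
        ((card3_iff _ _ _).mp h01c).2.1
    · exact heq
    · exact absurd (((card1_iff _ _ _).mp (h01a n1 hgt)).2)
        ((card3_iff _ _ _).mp h1c).2.1
  subst e1; subst e2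
  set n := n0 with hn
  obtain ⟨d1, d2, d3⟩ := (card3_iff _ _ _).mp h0c   -- w≠y0, w≠z0, y0≠z0
  obtain ⟨e1', e2', e3'⟩ := (card3_iff _ _ _).mp h01c -- w≠y0, w≠z1, y0≠z1
  obtain ⟨f1, f2, f3⟩ := (card3_iff _ _ _).mp h1c   -- w≠y1, w≠z1, y1≠z1
  -- z1 n = z0 n, then y1 n = y0 n
  have hz : z 1 n = z 0 n :=
    fin3_pigeon (w n) (y 0 n) (z 0 n) (z 1 n) d1 d2 d3 (Ne.symm e2') (Ne.symm e3')
  have hy1z0 : y 1 n ≠ z 0 n := by rw [← hz]; exact f3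
  -- ETern w (y 1) (z 0) holds
  have hE : ETern w (y 1) (z 0) := by
    refine ⟨n, fun m hm => ?_, ?_⟩
    · have a1 := (card1_iff _ _ _).mp (h1a m hm)
      have a0 := (card1_iff _ _ _).mp (h0a m hm)
      exact (card1_iff _ _ _).mpr ⟨a1.1, a0.2⟩
    · exact (card3_iff _ _ _).mpr ⟨f1, d2, hy1z0⟩
  exact absurd ((h 1 0).mp hE) (by decide)

/-- `ETern` is slice-wise `7`-stable: no slice in any of the three directions admits a
ladder of height `7`. -/
theorem eTern_sliceWise_seven_stable :
    (∀ x : ℕ → Fin 3, ¬ ∃ (y z : Fin 7 → (ℕ → Fin 3)),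
        ∀ i j : Fin 7, ETern x (y i) (z j) ↔ i ≤ j) ∧
    (∀ y : ℕ → Fin 3, ¬ ∃ (x z : Fin 7 → (ℕ → Fin 3)),
        ∀ i j : Fin 7, ETern (x i) y (z j) ↔ i ≤ j) ∧
    (∀ z : ℕ → Fin 3, ¬ ∃ (x y : Fin 7 → (ℕ → Fin 3)),
        ∀ i j : Fin 7, ETern (x i) (y j) z ↔ i ≤ j) := by
  refine ⟨?_, ?_, ?_⟩
  · rintro x ⟨y, z, hyz⟩
    exact key x y z hyz
  · rintro y ⟨x, z, hxz⟩
    exact key y x z (fun i j => (ETern_swap12 y (x i) (z j)).trans (hxz i j))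
  · rintro z ⟨x, y, hxy⟩
    exact key z x y (fun i j => (ETern_rot (x i) (y j) z).symm.trans (hxy i j))
end
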